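/- arXiv:1409.6059 — 15 statements merged into one kernel-verified Lean document; each statement's English description precedes it below -/
import Mathlib

section
/- Let a, b be real numbers with 1 − a − b ≤ 0 and b > 0. Then the function g(x) = x(x−1)/(x² − a·x − b) is concave on the open interval (0, 1). -/
/-- `x ↦ x⁻¹` is convex on `(0, ∞)`. -/
lemma aux_inv_convex : ConvexOn ℝ (Set.Ioi (0 : ℝ)) (fun x : ℝ => x⁻¹) := by
  have h := (strictConvexOn_zpow (m := -1) (by decide) (by decide)).convexOn
  refine h.congr fun x hx => by simp [zpow_neg]

/-- `x ↦ (x - r)⁻¹` is convex on `(r, ∞)`. -/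
lemma aux_inv_shift_convex (r : ℝ) :
    ConvexOn ℝ (Set.Ioi r) (fun x : ℝ => (x - r)⁻¹) := by
  have h := aux_inv_convex.comp_affineMap
    (AffineMap.id ℝ ℝ - AffineMap.const ℝ ℝ r)
  have hset : ((AffineMap.id ℝ ℝ - AffineMap.const ℝ ℝ r) ⁻¹' Set.Ioi 0)
      = Set.Ioi r := by
    ext x
    simp [AffineMap.coe_sub, sub_pos]
  rw [hset] at h
  exact h.congr fun x hx => by simp [AffineMap.coe_sub]

/-- `x ↦ (r - x)⁻¹` is convex on `(-∞, r)`. -/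
lemma aux_inv_shift_convex' (r : ℝ) :
    ConvexOn ℝ (Set.Iio r) (fun x : ℝ => (r - x)⁻¹) := by
  have h := aux_inv_convex.comp_affineMap
    (AffineMap.const ℝ ℝ r - AffineMap.id ℝ ℝ)
  have hset : ((AffineMap.const ℝ ℝ r - AffineMap.id ℝ ℝ) ⁻¹' Set.Ioi 0)
      = Set.Iio r := by
    ext x
    simp [AffineMap.coe_sub, sub_pos]
  rw [hset] at h
  exact h.congr fun x hx => by simp [AffineMap.coe_sub]

/-- For real `a`, `b` with `1 - a - b ≤ 0` and `b > 0`, the function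
`g(x) = x(x-1)/(x² - a·x - b)` is concave on the open interval `(0, 1)`. -/
theorem stmt_0 (a b : ℝ) (hab : 1 - a - b ≤ 0) (hb : 0 < b) :
    ConcaveOn ℝ (Set.Ioo (0 : ℝ) 1)
      (fun x : ℝ => x * (x - 1) / (x ^ 2 - a * x - b)) := by
  -- roots of the denominator
  set s : ℝ := Real.sqrt (a ^ 2 + 4 * b) with hs_def
  have hs_sq : s ^ 2 = a ^ 2 + 4 * b := Real.sq_sqrt (by nlinarith [sq_nonneg a])
  have hs_nonneg : 0 ≤ s := Real.sqrt_nonneg _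
  have hs_pos : 0 < s := by nlinarith
  set r₁ : ℝ := (a - s) / 2 with hr₁_def
  set r₂ : ℝ := (a + s) / 2 with hr₂_def
  have hsum : r₁ + r₂ = a := by rw [hr₁_def, hr₂_def]; ring
  have hprod : r₁ * r₂ = -b := by
    rw [hr₁_def, hr₂_def]
    have : (a - s) / 2 * ((a + s) / 2) = (a ^ 2 - s ^ 2) / 4 := by ring
    rw [this, hs_sq]; ring
  have hr₁_neg : r₁ < 0 := by
    rw [hr₁_def]
    have : a < s := by nlinarith
    linarith
  have hr₂_ge : 1 ≤ r₂ := by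
    rw [hr₂_def]
    have h2 : 2 - a ≤ s := by
      rcases le_or_gt (2 - a) 0 with h | h
      · linarith
      · nlinarith
    linarith
  have hne : r₁ - r₂ ≠ 0 := by
    have : r₁ - r₂ = -s := by rw [hr₁_def, hr₂_def]; ring
    rw [this]; exact neg_ne_zero.mpr (ne_of_gt hs_pos)
  -- partial fraction coefficients
  set A : ℝ := r₁ * (r₁ - 1) / (r₁ - r₂) with hA_def
  set B : ℝ := r₂ * (r₂ - 1) / (r₂ - r₁) with hB_def
  have hA_nonpos : A ≤ 0 := by
    rw [hA_def]
    apply div_nonpos_of_nonneg_of_nonpos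
    · nlinarith
    · nlinarith
  have hB_nonneg : 0 ≤ B := by
    rw [hB_def]
    apply div_nonneg
    · nlinarith
    · nlinarith
  clear_value A B
  clear_value s r₁ r₂
  -- concavity of the decomposed function
  have hIoo : Convex ℝ (Set.Ioo (0 : ℝ) 1) := convex_Ioo 0 1
  have h1 : ConcaveOn ℝ (Set.Ioo (0 : ℝ) 1) (fun x : ℝ => A * (x - r₁)⁻¹) := by
    have hc : ConvexOn ℝ (Set.Ioo (0 : ℝ) 1) (fun x : ℝ => (x - r₁)⁻¹) :=
      (aux_inv_shift_convex r₁).subset (fun x hx => lt_trans hr₁_neg hx.1) hIoo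
    refine (hc.smul (c := -A) (by linarith)).neg.congr fun x hx => ?_
    simp only [Pi.neg_apply, smul_eq_mul]
    ring
  have h2 : ConcaveOn ℝ (Set.Ioo (0 : ℝ) 1) (fun x : ℝ => B * (x - r₂)⁻¹) := by
    have hc : ConvexOn ℝ (Set.Ioo (0 : ℝ) 1) (fun x : ℝ => (r₂ - x)⁻¹) :=
      (aux_inv_shift_convex' r₂).subset (fun x hx => lt_of_lt_of_le hx.2 hr₂_ge) hIoo
    refine (hc.smul (c := B) hB_nonneg).neg.congr fun x hx => ?_
    simp only [Pi.neg_apply, smul_eq_mul]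
    rw [show (x - r₂)⁻¹ = -(r₂ - x)⁻¹ by rw [← inv_neg]; ring_nf]
    ring
  have hdecomp : ConcaveOn ℝ (Set.Ioo (0 : ℝ) 1)
      (fun x : ℝ => 1 + A * (x - r₁)⁻¹ + B * (x - r₂)⁻¹) := by
    have := ((concaveOn_const (1 : ℝ) hIoo).add h1).add h2
    exact this.congr fun x hx => rfl
  -- the original function equals the decomposition on (0,1)
  refine hdecomp.congr fun x hx => ?_
  have hx1 : x - r₁ ≠ 0 := ne_of_gt (by linarith [hx.1, hr₁_neg] : (0:ℝ) < x - r₁)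
  have hx2 : x - r₂ ≠ 0 := ne_of_lt (by linarith [hx.2, hr₂_ge] : x - r₂ < 0)
  have hden : x ^ 2 - a * x - b = (x - r₁) * (x - r₂) := by
    rw [← hsum]; nlinarith [hprod]
  have hdne : x ^ 2 - a * x - b ≠ 0 := by
    rw [hden]; exact mul_ne_zero hx1 hx2
  have hne' : r₂ - r₁ ≠ 0 := fun h => hne (by linarith [sub_eq_zero.mp h])
  rw [hden, hA_def, hB_def]
  field_simp
  ring
end

section
/- Let a, b be real numbers with a + b ≥ 1 and b > 0. Then the cubic f(x) = (a−1)x³ + 3b·x² − 3b·x + ab + b² satisfies f(x) > 0 for every x in the open interval (0, 1). -/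
/-- For real `a`, `b` with `a + b ≥ 1` and `b > 0`, the cubic
`f(x) = (a-1)x³ + 3bx² - 3bx + ab + b²` is positive on `(0, 1)`. -/
theorem stmt_2 (a b : ℝ) (hab : 1 ≤ a + b) (hb : 0 < b) :
    ∀ x ∈ Set.Ioo (0 : ℝ) 1,
      0 < (a - 1) * x ^ 3 + 3 * b * x ^ 2 - 3 * b * x + a * b + b ^ 2 := by
  rintro x ⟨hx0, hx1⟩
  nlinarith [mul_pos hb (pow_pos (sub_pos.mpr hx1) 3), pow_pos hx0 3,
    mul_nonneg (pow_pos hx0 3).le (sub_nonneg.mpr (by linarith : -b ≤ a - 1))]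
end

section
/- Let a, b, c be positive real numbers. Then the function f(x) = x·ln(1 + a/(b + c·x)) is strictly increasing and strictly concave on the interval (0, ∞). -/
open Real Set Filter

/-- For positive reals `a`, `b`, `c`, the function
`f(x) = x·ln(1 + a/(b + c·x))` is strictly increasing and strictly concave on `(0, ∞)`. -/
theorem stmt_4 (a b c : ℝ) (ha : 0 < a) (hb : 0 < b) (hc : 0 < c) :
    StrictMonoOn (fun x : ℝ => x * Real.log (1 + a / (b + c * x))) (Set.Ioi (0 : ℝ)) ∧
    StrictConcaveOn ℝ (Set.Ioi (0 : ℝ))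
      (fun x : ℝ => x * Real.log (1 + a / (b + c * x))) := by
  set f : ℝ → ℝ := fun x => x * Real.log (1 + a / (b + c * x)) with hf
  set F : ℝ → ℝ := fun x => x * (Real.log (a + b + c * x) - Real.log (b + c * x)) with hFdef
  set φ : ℝ → ℝ := fun x =>
    (Real.log (a + b + c * x) - Real.log (b + c * x)) +
      x * (c / (a + b + c * x) - c / (b + c * x)) with hφdef
  set ψ : ℝ → ℝ := fun x =>
    2 * (c / (a + b + c * x) - c / (b + c * x)) +
      x * (c * c / (b + c * x) ^ 2 - c * c / (a + b + c * x) ^ 2) with hψdef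
  -- equality of f and F on Ioi 0
  have heq : Set.EqOn f F (Set.Ioi 0) := by
    intro x hx
    have hx : (0:ℝ) < x := hx
    have hu : (0:ℝ) < b + c * x := by positivity
    have hv : (0:ℝ) < a + b + c * x := by positivity
    have h1 : 1 + a / (b + c * x) = (a + b + c * x) / (b + c * x) := by
      field_simp
      ring
    simp only [hf, hFdef, h1, Real.log_div hv.ne' hu.ne']
  -- derivative of F
  have hderivF : ∀ x : ℝ, 0 < x → HasDerivAt F (φ x) x := by
    intro x hx
    have hu : (0:ℝ) < b + c * x := by positivity
    have hv : (0:ℝ) < a + b + c * x := by positivity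
    have h1 : HasDerivAt (fun y : ℝ => a + b + c * y) c x := by
      simpa using ((hasDerivAt_id x).const_mul c).const_add (a + b)
    have h2 : HasDerivAt (fun y : ℝ => b + c * y) c x := by
      simpa using ((hasDerivAt_id x).const_mul c).const_add b
    have hl1 : HasDerivAt (fun y : ℝ => Real.log (a + b + c * y))
        ((a + b + c * x)⁻¹ * c) x := (Real.hasDerivAt_log hv.ne').comp x h1 (h := fun y : ℝ => a + b + c * y)
    have hl2 : HasDerivAt (fun y : ℝ => Real.log (b + c * y))
        ((b + c * x)⁻¹ * c) x := (Real.hasDerivAt_log hu.ne').comp x h2 (h := fun y : ℝ => b + c * y)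
    have := (hasDerivAt_id x).fun_mul (hl1.fun_sub hl2)
    refine this.congr_deriv ?_
    simp only [hφdef, id]
    field_simp
  -- derivative of f
  have hderivf : ∀ x : ℝ, 0 < x → HasDerivAt f (φ x) x := by
    intro x hx
    refine (hderivF x hx).congr_of_eventuallyEq ?_
    filter_upwards [isOpen_Ioi.mem_nhds (show x ∈ Set.Ioi (0:ℝ) from hx)] with y hy
    exact heq hy
  have hdf : ∀ x ∈ Set.Ioi (0:ℝ), deriv f x = φ x := fun x hx => (hderivf x hx).deriv
  -- derivative of φ
  have hderivφ : ∀ x : ℝ, 0 < x → HasDerivAt φ (ψ x) x := by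
    intro x hx
    have hu : (0:ℝ) < b + c * x := by positivity
    have hv : (0:ℝ) < a + b + c * x := by positivity
    have h1 : HasDerivAt (fun y : ℝ => a + b + c * y) c x := by
      simpa using ((hasDerivAt_id x).const_mul c).const_add (a + b)
    have h2 : HasDerivAt (fun y : ℝ => b + c * y) c x := by
      simpa using ((hasDerivAt_id x).const_mul c).const_add b
    have hl1 : HasDerivAt (fun y : ℝ => Real.log (a + b + c * y))
        ((a + b + c * x)⁻¹ * c) x := (Real.hasDerivAt_log hv.ne').comp x h1 (h := fun y : ℝ => a + b + c * y)
    have hl2 : HasDerivAt (fun y : ℝ => Real.log (b + c * y))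
        ((b + c * x)⁻¹ * c) x := (Real.hasDerivAt_log hu.ne').comp x h2 (h := fun y : ℝ => b + c * y)
    have hi1 : HasDerivAt (fun y : ℝ => c / (a + b + c * y))
        (c * (-c / (a + b + c * x) ^ 2)) x := by
      simpa [div_eq_mul_inv] using (h1.inv hv.ne').const_mul c
    have hi2 : HasDerivAt (fun y : ℝ => c / (b + c * y))
        (c * (-c / (b + c * x) ^ 2)) x := by
      simpa [div_eq_mul_inv] using (h2.inv hu.ne').const_mul c
    have := (hl1.fun_sub hl2).fun_add ((hasDerivAt_id x).fun_mul (hi1.fun_sub hi2))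
    refine this.congr_deriv ?_
    simp only [hψdef, id]
    field_simp
    ring
  -- positivity of φ on Ioi 0
  have hφpos : ∀ x : ℝ, 0 < x → 0 < φ x := by
    intro x hx
    have hu : (0:ℝ) < b + c * x := by positivity
    have hv : (0:ℝ) < a + b + c * x := by positivity
    have huv : b + c * x < a + b + c * x := by linarith
    have hlog : Real.log (b + c * x) < Real.log (a + b + c * x) := Real.log_lt_log hu huv
    have hexp := Real.add_one_lt_exp
      (x := Real.log (b + c * x) - Real.log (a + b + c * x)) (by intro h; nlinarith [sub_eq_zero.mp h])
    rw [Real.exp_sub, Real.exp_log hu, Real.exp_log hv] at hexp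
    -- so log v - log u > 1 - u/v = a/v
    have hav : a / (a + b + c * x) + (b + c * x) / (a + b + c * x) = 1 := by
      rw [← add_div, div_eq_one_iff_eq hv.ne']
      ring
    have key : a / (a + b + c * x) - x * (c / (b + c * x) - c / (a + b + c * x))
        = a * b / ((b + c * x) * (a + b + c * x)) := by
      field_simp
      ring
    have hpos : 0 < a * b / ((b + c * x) * (a + b + c * x)) := by positivity
    simp only [hφdef]
    nlinarith [hexp, hav, key, hpos]
  -- negativity of ψ on Ioi 0
  have hψneg : ∀ x : ℝ, 0 < x → ψ x < 0 := by
    intro x hx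
    have hu : (0:ℝ) < b + c * x := by positivity
    have hv : (0:ℝ) < a + b + c * x := by positivity
    have key : ψ x = -(a * c * (a * (b + c * x) + b * (b + c * x) + b * (a + b + c * x)))
        / ((b + c * x) ^ 2 * (a + b + c * x) ^ 2) := by
      simp only [hψdef]
      field_simp
      ring
    rw [key]
    have h1 : 0 < a * c * (a * (b + c * x) + b * (b + c * x) + b * (a + b + c * x)) := by
      positivity
    have h2 : 0 < (b + c * x) ^ 2 * (a + b + c * x) ^ 2 := by positivity
    exact div_neg_of_neg_of_pos (neg_neg_iff_pos.mpr h1) h2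
  -- continuity of f on Ioi 0
  have hcont : ContinuousOn f (Set.Ioi (0:ℝ)) := fun x hx =>
    (hderivf x hx).continuousAt.continuousWithinAt
  constructor
  · apply strictMonoOn_of_deriv_pos (convex_Ioi 0) hcont
    intro x hx
    rw [interior_Ioi] at hx
    rw [hdf x hx]
    exact hφpos x hx
  · apply strictConcaveOn_of_deriv2_neg (convex_Ioi 0) hcont
    intro x hx
    rw [interior_Ioi] at hx
    have hev : deriv f =ᶠ[nhds x] φ :=
      Filter.eventuallyEq_of_mem (isOpen_Ioi.mem_nhds hx) hdf
    have : deriv^[2] f x = deriv (deriv f) x := by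
      simp [Function.iterate_succ, Function.iterate_zero, Function.comp]
    rw [this, hev.deriv_eq, (hderivφ x hx).deriv]
    exact hψneg x hx
end

section
/- Let b > 0 and let g(x) = x(x−1)/(x² − x − b) (the normalized MRC SINR function with a = 1). Then x = 1/2 is a maximizer of g over the open interval (0, 1), i.e., g(1/2) ≥ g(x) for all x ∈ (0, 1). -/
/-- For `b > 0`, the point `x = 1/2` maximizes
`g(x) = x(x-1)/(x² - x - b)` over `(0, 1)`. -/
theorem stmt_6 (b : ℝ) (hb : 0 < b)
    (g : ℝ → ℝ) (hg : ∀ x, g x = x * (x - 1) / (x ^ 2 - x - b)) :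
    ∀ x ∈ Set.Ioo (0 : ℝ) 1, g x ≤ g (1 / 2) := by
  rintro x ⟨hx0, hx1⟩
  rw [hg, hg]
  have hd : 0 < -(x ^ 2 - x - b) := by nlinarith
  have hd2 : 0 < -((1/2 : ℝ) ^ 2 - 1/2 - b) := by nlinarith
  rw [show x * (x - 1) / (x ^ 2 - x - b) = (x * (1 - x)) / (-(x ^ 2 - x - b)) by
        rw [div_neg, ← neg_div]; ring_nf,
      show (1/2 : ℝ) * (1/2 - 1) / ((1/2) ^ 2 - 1/2 - b)
          = ((1/2 : ℝ) * (1 - 1/2)) / (-((1/2) ^ 2 - 1/2 - b)) by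
        rw [div_neg, ← neg_div]; ring_nf,
      div_le_div_iff₀ hd hd2]
  nlinarith [sq_nonneg (x - 1/2), sq_nonneg (x * (1 - x))]
end

section
/- Let a, b be real numbers with a < 1, b > 0, and b > 1 − a. Then α* = (b − √(b(a + b − 1)))/(1 − a) lies in the open interval (0, 1), and α* is a maximizer over (0, 1) of the function g(x) = x(x−1)/(x² − a·x − b), i.e., g(α*) ≥ g(x) for all x ∈ (0, 1). -/
/-- For real `a`, `b` with `a < 1`, `b > 0` and `b > 1 - a`, the point
`α* = (b - √(b(a+b-1)))/(1-a)` lies in `(0, 1)` and maximizes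
`g(x) = x(x-1)/(x² - a·x - b)` over `(0, 1)`. -/
theorem stmt_7 (a b : ℝ) (ha : a < 1) (hb : 0 < b) (hba : 1 - a < b)
    (g : ℝ → ℝ) (hg : ∀ x, g x = x * (x - 1) / (x ^ 2 - a * x - b))
    (αs : ℝ) (hαs : αs = (b - Real.sqrt (b * (a + b - 1))) / (1 - a)) :
    αs ∈ Set.Ioo (0 : ℝ) 1 ∧ ∀ x ∈ Set.Ioo (0 : ℝ) 1, g x ≤ g αs := by
  have ha' : (0:ℝ) < 1 - a := by linarith
  have hc0 : (0:ℝ) < a + b - 1 := by linarith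
  set s := Real.sqrt (b * (a + b - 1)) with hsdef
  have hs2 : s ^ 2 = b * (a + b - 1) := Real.sq_sqrt (by positivity)
  have hs0 : 0 < s := Real.sqrt_pos.mpr (by positivity)
  have hsb : s < b := by nlinarith
  have hcs : a + b - 1 < s := by nlinarith
  have hα : (1 - a) * αs = b - s := by
    rw [hαs]; field_simp
  have hα0 : 0 < αs := by nlinarith
  have hα1 : αs < 1 := by nlinarith
  have hD : ∀ x ∈ Set.Ioo (0:ℝ) 1, x ^ 2 - a * x - b < 0 := by
    rintro x ⟨hx0, hx1⟩
    nlinarith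
  have hDα := hD αs ⟨hα0, hα1⟩
  refine ⟨⟨hα0, hα1⟩, ?_⟩
  rintro x hx
  have hDx := hD x hx
  have key : x * (x - 1) * (αs ^ 2 - a * αs - b)
      - αs * (αs - 1) * (x ^ 2 - a * x - b) = -(s * (x - αs) ^ 2) := by
    have h2 : (1 - a) * (x * (x - 1) * (αs ^ 2 - a * αs - b)
        - αs * (αs - 1) * (x ^ 2 - a * x - b))
        = (1 - a) * (-(s * (x - αs) ^ 2)) := by
      linear_combination (x - αs) * hs2
        + (x * (x - αs) * (1 - a) - (b + s) * (x - αs)) * hα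
    exact mul_left_cancel₀ (by linarith) h2
  rw [hg, hg]
  rw [show x * (x - 1) / (x ^ 2 - a * x - b)
      = (-(x * (x - 1))) / (-(x ^ 2 - a * x - b)) by rw [neg_div_neg_eq],
    show αs * (αs - 1) / (αs ^ 2 - a * αs - b)
      = (-(αs * (αs - 1))) / (-(αs ^ 2 - a * αs - b)) by rw [neg_div_neg_eq]]
  rw [div_le_div_iff₀ (by linarith) (by linarith)]
  nlinarith [mul_nonneg hs0.le (sq_nonneg (x - αs))]
end

section
/- Let a, b be real numbers with a > 1 and b > 0. Then α* = (b − √(b(a + b − 1)))/(1 − a) = (√(b(a + b − 1)) − b)/(a − 1) lies in the open interval (0, 1), and α* is a maximizer over (0, 1) of the function g(x) = x(x−1)/(x² − a·x − b), i.e., g(α*) ≥ g(x) for all x ∈ (0, 1). -/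
/-- For real `a`, `b` with `a > 1` and `b > 0`, the point
`α* = (b - √(b(a+b-1)))/(1-a) = (√(b(a+b-1)) - b)/(a-1)` lies in `(0, 1)` and maximizes
`g(x) = x(x-1)/(x² - a·x - b)` over `(0, 1)`. -/
theorem stmt_8 (a b : ℝ) (ha : 1 < a) (hb : 0 < b)
    (g : ℝ → ℝ) (hg : ∀ x, g x = x * (x - 1) / (x ^ 2 - a * x - b))
    (αs : ℝ) (hαs : αs = (b - Real.sqrt (b * (a + b - 1))) / (1 - a)) :
    αs = (Real.sqrt (b * (a + b - 1)) - b) / (a - 1) ∧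
    αs ∈ Set.Ioo (0 : ℝ) 1 ∧
    ∀ x ∈ Set.Ioo (0 : ℝ) 1, g x ≤ g αs := by
  set s := Real.sqrt (b * (a + b - 1)) with hs
  have habm : 0 < a + b - 1 := by linarith
  have hs2 : s ^ 2 = b * (a + b - 1) := Real.sq_sqrt (by positivity)
  have hsnn : 0 ≤ s := Real.sqrt_nonneg _
  have hbs : b < s := by nlinarith
  have hsu : s < a + b - 1 := by nlinarith
  have ha1 : (0:ℝ) < a - 1 := by linarith
  have heq : αs = (s - b) / (a - 1) := by
    rw [hαs, div_eq_div_iff (by linarith) (by linarith)]; ring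
  have hα0 : 0 < αs := by
    rw [heq]; exact div_pos (by linarith) ha1
  have hα1 : αs < 1 := by
    rw [heq]; rw [div_lt_one ha1]; linarith
  -- key identity: αs satisfies the critical-point equation
  have hαa : αs * (a - 1) = s - b := by
    rw [heq]; field_simp
  have hkey : αs ^ 2 * (a - 1) + 2 * b * αs - b = 0 := by
    have h1 : (αs ^ 2 * (a - 1) + 2 * b * αs - b) * (a - 1) =
        s ^ 2 - b * (a + b - 1) := by
      have : αs ^ 2 * (a - 1) ^ 2 = (s - b) ^ 2 := by
        rw [← hαa]; ring
      nlinarith [this]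
    have := h1
    rw [hs2, sub_self] at this
    have := mul_eq_zero.mp this
    rcases this with h | h
    · exact h
    · linarith
  refine ⟨heq, ⟨hα0, hα1⟩, ?_⟩
  intro x hx
  obtain ⟨hx0, hx1⟩ := hx
  have hDx : x ^ 2 - a * x - b < 0 := by nlinarith
  have hDα : αs ^ 2 - a * αs - b < 0 := by nlinarith
  rw [hg, hg, ← sub_nonneg]
  have hnum : αs * (αs - 1) * (x ^ 2 - a * x - b) -
      x * (x - 1) * (αs ^ 2 - a * αs - b) =
      (x - αs) ^ 2 * (αs * (a - 1) + b) := by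
    linear_combination (x - αs) * hkey
  have hfrac : 0 ≤ (αs * (αs - 1) * (x ^ 2 - a * x - b) -
      x * (x - 1) * (αs ^ 2 - a * αs - b)) /
      ((αs ^ 2 - a * αs - b) * (x ^ 2 - a * x - b)) := by
    apply div_nonneg
    · rw [hnum]; positivity
    · exact le_of_lt (mul_pos_of_neg_of_neg hDα hDx)
  rw [div_sub_div _ _ hDα.ne hDx.ne]
  convert hfrac using 2; ring
end

section
/- Let ρ, T, T_d be positive reals and K, M natural numbers with M > K ≥ 2 and T_d ≠ K. Define the MRC SINR as a function of the training energy fraction α by S(α) = α(1−α)ρ²T²(M−1) / (α(1−α)ρ²T²(K−1) + K(1−α)ρT + αρT·T_d + T_d). Then α* = (√((ρTK + T_d)(ρT·T_d + T_d)) − (ρTK + T_d)) / (ρT(T_d − K)) lies in the open interval (0, 1) and maximizes S over (0, 1), i.e., S(α*) ≥ S(α) for all α ∈ (0, 1). -/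
set_option maxHeartbeats 1000000 in
/-- For `ρ, T, T_d > 0`, naturals `M > K ≥ 2`, and `T_d ≠ K`, the point
`α* = (√((ρTK + T_d)(ρTT_d + T_d)) - (ρTK + T_d))/(ρT(T_d - K))` lies in `(0, 1)` and
maximizes the MRC SINR
`S(α) = α(1-α)ρ²T²(M-1)/(α(1-α)ρ²T²(K-1) + K(1-α)ρT + αρTT_d + T_d)` over `(0, 1)`. -/
theorem stmt_9 (ρ T Td : ℝ) (hρ : 0 < ρ) (hT : 0 < T) (hTd : 0 < Td)
    (K M : ℕ) (hK : 2 ≤ K) (hMK : K < M) (hTdK : Td ≠ (K : ℝ))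
    (S : ℝ → ℝ)
    (hS : ∀ α, S α =
      α * (1 - α) * ρ ^ 2 * T ^ 2 * ((M : ℝ) - 1) /
        (α * (1 - α) * ρ ^ 2 * T ^ 2 * ((K : ℝ) - 1) + (K : ℝ) * (1 - α) * ρ * T +
          α * ρ * T * Td + Td))
    (αs : ℝ)
    (hαs : αs = (Real.sqrt ((ρ * T * (K : ℝ) + Td) * (ρ * T * Td + Td)) -
      (ρ * T * (K : ℝ) + Td)) / (ρ * T * (Td - (K : ℝ)))) :
    αs ∈ Set.Ioo (0 : ℝ) 1 ∧ ∀ α ∈ Set.Ioo (0 : ℝ) 1, S α ≤ S αs := by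
  have hK2 : (2 : ℝ) ≤ (K : ℝ) := by exact_mod_cast hK
  have hM : (K : ℝ) < (M : ℝ) := by exact_mod_cast hMK
  have hρT : 0 < ρ * T := mul_pos hρ hT
  have hTdK' : Td - (K : ℝ) ≠ 0 := sub_ne_zero.mpr hTdK
  have hQne : ρ * T * (Td - (K : ℝ)) ≠ 0 := mul_ne_zero (ne_of_gt hρT) hTdK'
  have hP : 0 < ρ * T * (K : ℝ) + Td := by nlinarith
  have hPQ : 0 < ρ * T * Td + Td := by positivity
  set s : ℝ := Real.sqrt ((ρ * T * (K : ℝ) + Td) * (ρ * T * Td + Td)) with hsdef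
  have hs2 : s ^ 2 = (ρ * T * (K : ℝ) + Td) * (ρ * T * Td + Td) :=
    Real.sq_sqrt (by positivity)
  have hs_pos : 0 < s := Real.sqrt_pos.mpr (by positivity)
  have hQαs : ρ * T * (Td - (K : ℝ)) * αs = s - (ρ * T * (K : ℝ) + Td) := by
    rw [hαs]; field_simp
  have hqz : ρ * T * (Td - (K : ℝ)) *
      (ρ * T * (Td - (K : ℝ)) * αs ^ 2 + 2 * (ρ * T * (K : ℝ) + Td) * αs
        - (ρ * T * (K : ℝ) + Td)) = 0 := by
    have hsq : (ρ * T * (Td - (K : ℝ)) * αs + (ρ * T * (K : ℝ) + Td)) ^ 2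
        = (ρ * T * (K : ℝ) + Td) * (ρ * T * Td + Td) := by
      rw [hQαs]; ring_nf; linarith [hs2]
    nlinarith [hsq]
  have heq : ρ * T * (Td - (K : ℝ)) * αs ^ 2 + 2 * (ρ * T * (K : ℝ) + Td) * αs
      - (ρ * T * (K : ℝ) + Td) = 0 := by
    rcases mul_eq_zero.mp hqz with h | h
    · exact absurd h hQne
    · exact h
  -- bounds on αs
  have hbounds : 0 < αs ∧ αs < 1 := by
    rcases hTdK'.lt_or_gt with h | h
    · -- Td < K, Q < 0
      have hQneg : ρ * T * (Td - (K : ℝ)) < 0 := mul_neg_of_pos_of_neg hρT h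
      have hKT : 0 < (K : ℝ) - Td := by linarith
      have hs_lt : s < ρ * T * (K : ℝ) + Td := by
        nlinarith [hs2, hs_pos, mul_pos hP (mul_pos hρT hKT)]
      have hs_gt : ρ * T * Td + Td < s := by
        nlinarith [hs2, hs_pos, mul_pos hPQ (mul_pos hρT hKT)]
      constructor
      · rw [hαs]
        exact div_pos_of_neg_of_neg (by linarith) hQneg
      · rw [hαs, div_lt_one_iff]
        exact Or.inr (Or.inr ⟨hQneg, by linarith⟩)
    · -- K < Td, Q > 0
      have hQpos : 0 < ρ * T * (Td - (K : ℝ)) := mul_pos hρT h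
      have hs_gt : ρ * T * (K : ℝ) + Td < s := by
        nlinarith [hs2, hs_pos, mul_pos hP hQpos]
      have hs_lt : s < ρ * T * Td + Td := by
        nlinarith [hs2, hs_pos, mul_pos hPQ hQpos]
      constructor
      · rw [hαs]
        exact div_pos (by linarith) hQpos
      · rw [hαs, div_lt_one hQpos]
        linarith
  obtain ⟨hαs0, hαs1⟩ := hbounds
  have hNs : 0 < ρ * T * (Td - (K : ℝ)) * αs + (ρ * T * (K : ℝ) + Td) := by
    have : ρ * T * (Td - (K : ℝ)) * αs + (ρ * T * (K : ℝ) + Td) = s := by linarith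
    rw [this]; exact hs_pos
  have hD : ∀ β : ℝ, 0 < β → β < 1 →
      0 < β * (1 - β) * ρ ^ 2 * T ^ 2 * ((K : ℝ) - 1) + (K : ℝ) * (1 - β) * ρ * T +
        β * ρ * T * Td + Td := by
    intro β hβ0 hβ1
    have h1 : 0 ≤ β * (1 - β) * ρ ^ 2 * T ^ 2 * ((K : ℝ) - 1) := by
      apply mul_nonneg
      apply mul_nonneg
      apply mul_nonneg
      · exact mul_nonneg hβ0.le (by linarith)
      · exact sq_nonneg ρ
      · exact sq_nonneg T
      · linarith
    have h2 : 0 < (K : ℝ) * (1 - β) * ρ * T :=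
      mul_pos (mul_pos (mul_pos (by linarith) (by linarith)) hρ) hT
    have h3 : 0 < β * ρ * T * Td := mul_pos (mul_pos (mul_pos hβ0 hρ) hT) hTd
    linarith
  refine ⟨⟨hαs0, hαs1⟩, ?_⟩
  rintro α ⟨hα0, hα1⟩
  rw [hS α, hS αs, div_le_div_iff₀ (hD α hα0 hα1) (hD αs hαs0 hαs1)]
  have key : αs * (1 - αs) * ρ ^ 2 * T ^ 2 * ((M : ℝ) - 1) *
        (α * (1 - α) * ρ ^ 2 * T ^ 2 * ((K : ℝ) - 1) + (K : ℝ) * (1 - α) * ρ * T +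
          α * ρ * T * Td + Td)
      - α * (1 - α) * ρ ^ 2 * T ^ 2 * ((M : ℝ) - 1) *
        (αs * (1 - αs) * ρ ^ 2 * T ^ 2 * ((K : ℝ) - 1) + (K : ℝ) * (1 - αs) * ρ * T +
          αs * ρ * T * Td + Td)
      = ρ ^ 2 * T ^ 2 * ((M : ℝ) - 1) *
        ((ρ * T * (Td - (K : ℝ)) * αs + (ρ * T * (K : ℝ) + Td)) * (α - αs) ^ 2) := by
    linear_combination (ρ ^ 2 * T ^ 2 * ((M : ℝ) - 1) * (α - αs)) * heq
  have h4 : 0 ≤ ρ ^ 2 * T ^ 2 * ((M : ℝ) - 1) *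
      ((ρ * T * (Td - (K : ℝ)) * αs + (ρ * T * (K : ℝ) + Td)) * (α - αs) ^ 2) := by
    apply mul_nonneg
    · apply mul_nonneg (mul_nonneg (sq_nonneg ρ) (sq_nonneg T)); linarith
    · exact mul_nonneg hNs.le (sq_nonneg _)
  linarith
end

section
/- Fix positive reals T, T_d and a natural number K ≥ 1 with T_d ≠ K. For ρ > 0 define α*(ρ) = (√((ρTK + T_d)(ρT·T_d + T_d)) − (ρTK + T_d)) / (ρT(T_d − K)). Then α*(ρ) tends to 1/2 as ρ tends to 0 from the right. -/
/-- Low-SNR limit: with `T, T_d > 0`, `K ≥ 1` natural and `T_d ≠ K`,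
the optimal fraction `α*(ρ) = (√((ρTK + T_d)(ρTT_d + T_d)) - (ρTK + T_d))/(ρT(T_d - K))`
tends to `1/2` as `ρ → 0⁺`. -/
theorem stmt_10 (T Td : ℝ) (hT : 0 < T) (hTd : 0 < Td)
    (K : ℕ) (hK : 1 ≤ K) (hTdK : Td ≠ (K : ℝ)) :
    Filter.Tendsto
      (fun ρ : ℝ =>
        (Real.sqrt ((ρ * T * (K : ℝ) + Td) * (ρ * T * Td + Td)) -
          (ρ * T * (K : ℝ) + Td)) / (ρ * T * (Td - (K : ℝ))))
      (nhdsWithin 0 (Set.Ioi 0)) (nhds (1 / 2)) := by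
  have hK0 : (0:ℝ) ≤ (K:ℝ) := Nat.cast_nonneg K
  set g : ℝ → ℝ := fun ρ =>
    (ρ * T * (K : ℝ) + Td) /
      (Real.sqrt ((ρ * T * (K : ℝ) + Td) * (ρ * T * Td + Td)) + (ρ * T * (K : ℝ) + Td))
    with hg
  have hgt : Filter.Tendsto g (nhdsWithin 0 (Set.Ioi 0)) (nhds (1 / 2)) := by
    have hcont : ContinuousAt g 0 := by
      have h0 : Real.sqrt ((0 * T * (K : ℝ) + Td) * (0 * T * Td + Td)) +
          (0 * T * (K : ℝ) + Td) ≠ 0 := by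
        have : (0:ℝ) < Real.sqrt ((0 * T * (K : ℝ) + Td) * (0 * T * Td + Td)) +
            (0 * T * (K : ℝ) + Td) := by
          have : (0:ℝ) < 0 * T * (K : ℝ) + Td := by nlinarith
          positivity
        linarith
      exact ContinuousAt.div (by fun_prop) (by fun_prop) h0
    have hval : g 0 = 1 / 2 := by
      have : Real.sqrt ((0 * T * (K : ℝ) + Td) * (0 * T * Td + Td)) = Td := by
        have : (0 * T * (K : ℝ) + Td) * (0 * T * Td + Td) = Td ^ 2 := by ring
        rw [this, Real.sqrt_sq hTd.le]
      simp only [hg]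
      rw [this]
      field_simp
      ring
    have := hcont.tendsto
    rw [hval] at this
    exact this.mono_left nhdsWithin_le_nhds
  refine hgt.congr' ?_
  filter_upwards [self_mem_nhdsWithin] with ρ hρ
  have hρ0 : (0:ℝ) < ρ := hρ
  set A : ℝ := ρ * T * (K : ℝ) + Td with hA
  set B : ℝ := ρ * T * Td + Td with hB
  have hApos : 0 < A := by have := mul_pos (mul_pos hρ0 hT) hTd; nlinarith [mul_nonneg (mul_pos hρ0 hT).le hK0]
  have hBpos : 0 < B := by nlinarith [mul_pos (mul_pos hρ0 hT) hTd]
  have hABnn : 0 ≤ A * B := (mul_pos hApos hBpos).le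
  have hsq : Real.sqrt (A * B) ^ 2 = A * B := Real.sq_sqrt hABnn
  have hden1 : Real.sqrt (A * B) + A ≠ 0 := by positivity
  have hden2 : ρ * T * (Td - (K:ℝ)) ≠ 0 := by
    have : Td - (K:ℝ) ≠ 0 := sub_ne_zero.mpr hTdK
    positivity
  simp only [hg]
  rw [div_eq_div_iff hden1 hden2]
  have hBA : B - A = ρ * T * (Td - (K:ℝ)) := by simp [hA, hB]; ring
  nlinarith [hsq, hBA]
end

section
/- Let γ < −1. Then the function α ↦ −α(1−α)/(γ + α) is concave on the open interval (0, 1). -/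
private lemma concaveOn_congr' {s : Set ℝ} {f g : ℝ → ℝ} (hg : ConcaveOn ℝ s g)
    (h : ∀ x ∈ s, f x = g x) : ConcaveOn ℝ s f := by
  refine ⟨hg.1, fun x hx y hy a b ha hb hab => ?_⟩
  rw [h x hx, h y hy, h _ (hg.1 hx hy ha hb hab)]
  exact hg.2 hx hy ha hb hab

/-- For `γ < -1`, the function `α ↦ -α(1-α)/(γ + α)` is concave on `(0, 1)`. -/
theorem stmt_13 (γ : ℝ) (hγ : γ < -1) :
    ConcaveOn ℝ (Set.Ioo (0 : ℝ) 1) (fun α : ℝ => -(α * (1 - α) / (γ + α))) := by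
  have h1 : ConvexOn ℝ (Set.Ioi (0:ℝ)) (fun x : ℝ => x ^ (-1 : ℤ)) :=
    (strictConvexOn_zpow (by norm_num) (by norm_num)).convexOn
  -- affine map x ↦ -x - γ
  let A : ℝ →ᵃ[ℝ] ℝ := AffineMap.mk' (fun x => -x - γ) (-(LinearMap.id)) 0
    (by intro p; simp; ring)
  have hA : ∀ x, A x = -x - γ := fun x => rfl
  have h2 : ConvexOn ℝ (Set.Ioo (0:ℝ) 1) (fun x : ℝ => (-x - γ) ^ (-1 : ℤ)) := by
    have := h1.comp_affineMap A
    refine (this.subset ?_ (convex_Ioo 0 1))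
    intro x hx
    simp only [Set.mem_preimage, hA, Set.mem_Ioi]
    linarith [hx.1, hx.2]
  have h3 : ConcaveOn ℝ (Set.Ioo (0:ℝ) 1) (fun x : ℝ => -((-x - γ) ^ (-1 : ℤ))) := h2.neg
  have hc : (0:ℝ) ≤ γ * (γ + 1) := by nlinarith
  have h4 := h3.smul hc
  have hlin : ConcaveOn ℝ (Set.Ioo (0:ℝ) 1) (fun x : ℝ => x - (1 + γ)) :=
    (concaveOn_id (convex_Ioo 0 1)).sub (convexOn_const _ (convex_Ioo 0 1))
  have h5 := hlin.add h4
  refine concaveOn_congr' h5 ?_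
  intro x hx
  have hne : γ + x ≠ 0 := by
    have : γ + x < 0 := by linarith [hx.2]
    linarith
  have hne2 : -x - γ ≠ 0 := by intro h; apply hne; linarith [h]
  simp only [Pi.add_apply, Pi.sub_apply, smul_eq_mul, zpow_neg, zpow_one]
  field_simp
  ring
end

section
/- Let γ > 0. Then α* = −γ + √(γ(γ+1)) lies in the open interval (0, 1) and maximizes the function h(α) = α(1−α)/(γ + α) over (0, 1), i.e., h(α*) ≥ h(α) for all α ∈ (0, 1). -/
/-- For `γ > 0`, the point `α* = -γ + √(γ(γ+1))` lies in `(0, 1)` and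
maximizes `h(α) = α(1-α)/(γ + α)` over `(0, 1)`. -/
theorem stmt_14 (γ : ℝ) (hγ : 0 < γ)
    (αs : ℝ) (hαs : αs = -γ + Real.sqrt (γ * (γ + 1))) :
    αs ∈ Set.Ioo (0 : ℝ) 1 ∧
    ∀ α ∈ Set.Ioo (0 : ℝ) 1, α * (1 - α) / (γ + α) ≤ αs * (1 - αs) / (γ + αs) := by
  set s := Real.sqrt (γ * (γ + 1)) with hs
  have hnn : 0 ≤ γ * (γ + 1) := by nlinarith
  have hs2 : s ^ 2 = γ * (γ + 1) := Real.sq_sqrt hnn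
  have hspos : 0 < s := Real.sqrt_pos.mpr (by nlinarith)
  have hγs : γ < s := by nlinarith [sq_nonneg (s - γ)]
  have hs1 : s < γ + 1 := by nlinarith [sq_nonneg (s - γ - 1)]
  constructor
  · exact ⟨by simp [hαs]; linarith, by simp [hαs]; linarith⟩
  · intro α hα
    obtain ⟨h0, h1⟩ := hα
    have ht : 0 < γ + α := by linarith
    have hts : γ + αs = s := by rw [hαs]; ring
    rw [hts, div_le_div_iff₀ ht hspos]
    have key : αs * (1 - αs) * (γ + α) - α * (1 - α) * s = s * (γ + α - s) ^ 2 := by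
      rw [hαs]; nlinarith [hs2]
    nlinarith [mul_nonneg hspos.le (sq_nonneg (γ + α - s)), key]
end

section
/- Let γ < −1. Then α* = −γ − √(γ(γ+1)) lies in the open interval (0, 1) and maximizes the function α ↦ −α(1−α)/(γ + α) over (0, 1), i.e., −α*(1−α*)/(γ+α*) ≥ −α(1−α)/(γ+α) for all α ∈ (0, 1). -/
/-- For `γ < -1`, the point `α* = -γ - √(γ(γ+1))` lies in `(0, 1)` and
maximizes `α ↦ -α(1-α)/(γ + α)` over `(0, 1)`. -/
theorem stmt_15 (γ : ℝ) (hγ : γ < -1)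
    (αs : ℝ) (hαs : αs = -γ - Real.sqrt (γ * (γ + 1))) :
    αs ∈ Set.Ioo (0 : ℝ) 1 ∧
    ∀ α ∈ Set.Ioo (0 : ℝ) 1,
      -(α * (1 - α) / (γ + α)) ≤ -(αs * (1 - αs) / (γ + αs)) := by
  set s := Real.sqrt (γ * (γ + 1)) with hs
  have hprod : (0:ℝ) ≤ γ * (γ + 1) := by nlinarith
  have hs0 : 0 ≤ s := Real.sqrt_nonneg _
  have hs2 : s ^ 2 = γ * (γ + 1) := Real.sq_sqrt hprod
  have hslt : s < -γ := by
    nlinarith [sq_nonneg (s + γ)]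
  have hsgt : -γ - 1 < s := by
    nlinarith [sq_nonneg (s - (-γ - 1))]
  have hαs0 : 0 < αs := by rw [hαs]; linarith
  have hαs1 : αs < 1 := by rw [hαs]; linarith
  have hsp : 0 < s := by linarith
  have hgs : γ + αs = -s := by rw [hαs]; ring
  refine ⟨⟨hαs0, hαs1⟩, ?_⟩
  rintro α ⟨hα0, hα1⟩
  have ht : 0 < -(γ + α) := by linarith
  have h1 : -(α * (1 - α) / (γ + α)) = α * (1 - α) / (-(γ + α)) := by
    rw [div_neg]
  have h2 : -(αs * (1 - αs) / (γ + αs)) = αs * (1 - αs) / s := by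
    rw [hgs, div_neg, neg_neg]
  rw [h1, h2, div_le_div_iff₀ ht hsp, hαs]
  nlinarith [mul_nonneg hsp.le (sq_nonneg (γ + α + s)), sq_nonneg (γ + α + s)]
end

section
/- Let ρ, ρmax, T be positive reals with ρ < ρmax, and let K, M be natural numbers with M > K ≥ 2 and K < T. Assume α₁ := ρmax·K/(ρT) < 1. For α ∈ [α₁, 1], set T_d(α) = T − (ρT/ρmax)·α, S(α) = α(1−α)ρ²T²(M−1) / (α(1−α)ρ²T²(K−1) + K(1−α)ρT + αρT·T_d(α) + T_d(α)), and R(α) = (K/T)·T_d(α)·log₂(1 + S(α)). Then R is quasiconcave on the interval [α₁, 1]: every superlevel set {α ∈ [α₁, 1] : R(α) ≥ β}, β ∈ ℝ, is convex. -/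
lemma quad_fact (A B C : ℝ) (hA : 0 < A) (hC : 0 < C) :
    ∃ r₁ r₂ : ℝ, r₁ < 0 ∧ 0 < r₂ ∧ (∀ w : ℝ, -A*w^2 + B*w + C = A*(r₂-w)*(w-r₁)) := by
  have hΔ : 0 < B^2 + 4*A*C := by nlinarith
  have hr2 : Real.sqrt (B^2+4*A*C) ^ 2 = B^2+4*A*C := Real.sq_sqrt hΔ.le
  set r := Real.sqrt (B^2+4*A*C) with hr
  have hrpos : 0 < r := Real.sqrt_pos.2 hΔ
  have hrB : B < r := by nlinarith
  have hrB' : -r < B := by nlinarith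
  refine ⟨(B-r)/(2*A), (B+r)/(2*A), div_neg_of_neg_of_pos (by linarith) (by linarith),
    div_pos (by linarith) (by linarith), ?_⟩
  intro w
  have h2A : (2*A) ≠ 0 := by positivity
  field_simp
  ring_nf
  nlinarith [hr2]

lemma amhm (u v a b : ℝ) (hu : 0 < u) (hv : 0 < v) (ha : 0 ≤ a) (hb : 0 ≤ b)
    (hab : a + b = 1) : (a*u + b*v)⁻¹ ≤ a * u⁻¹ + b * v⁻¹ := by
  have h1 : a * u⁻¹ + b * v⁻¹ = (a*v + b*u)/(u*v) := by field_simp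
  have huv : 0 < a*u + b*v := by
    rcases lt_or_eq_of_le ha with h'|h'
    · nlinarith [mul_pos h' hu, mul_nonneg hb hv.le]
    · have hb1 : b = 1 := by linarith
      rw [← h', hb1]; simpa using hv
  have h3 : a^2 + 2*(a*b) + b^2 = 1 := by linear_combination (a+b+1)*hab
  have h4 : u*v*(a^2 + 2*(a*b) + b^2) = u*v := by rw [h3]; ring
  rw [h1, inv_eq_one_div, div_le_div_iff₀ huv (by positivity)]
  nlinarith [h4, mul_nonneg (mul_nonneg ha hb) (sq_nonneg (u-v)), mul_pos hu hv]

lemma logconc (u v a b : ℝ) (hu : 0 < u) (hv : 0 < v) (ha : 0 ≤ a) (hb : 0 ≤ b)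
    (hab : a + b = 1) : a * Real.log u + b * Real.log v ≤ Real.log (a*u + b*v) := by
  simpa using (strictConcaveOn_log_Ioi.concaveOn).2 (Set.mem_Ioi.2 hu)
    (Set.mem_Ioi.2 hv) ha hb hab

lemma prodmin (f1 f2 g1 g2 a b m : ℝ) (hf1 : 0 ≤ f1) (hf2 : 0 ≤ f2) (hg1 : 0 ≤ g1)
    (hg2 : 0 ≤ g2) (hm1 : m ≤ f1*g1) (hm2 : m ≤ f2*g2) (ha : 0 ≤ a) (hb : 0 ≤ b)
    (hab : a + b = 1) : m ≤ (a*f1 + b*f2) * (a*g1 + b*g2) := by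
  rcases le_or_gt m 0 with h|h
  · have : (0:ℝ) ≤ (a*f1 + b*f2) * (a*g1 + b*g2) := by positivity
    linarith
  · have hcross : 2*m ≤ f1*g2 + f2*g1 := by
      nlinarith [sq_nonneg (f1*g2 - f2*g1), mul_nonneg (sub_nonneg.2 hm1) (sub_nonneg.2 hm2),
        mul_nonneg hf1 hg2, mul_nonneg hf2 hg1, h, hm1, hm2]
    have h3 : a^2 + 2*(a*b) + b^2 = 1 := by linear_combination (a+b+1)*hab
    have h4 : m*(a^2 + 2*(a*b) + b^2) = m := by rw [h3]; ring
    nlinarith [h4, mul_nonneg (mul_nonneg ha ha) (sub_nonneg.2 hm1),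
      mul_nonneg (mul_nonneg hb hb) (sub_nonneg.2 hm2),
      mul_nonneg (mul_nonneg ha hb) (by linarith : (0:ℝ) ≤ f1*g2 + f2*g1 - 2*m)]

lemma concave_comb (c₀ c₁ c₂ r₁ r₂ x y a b : ℝ) (hc₁ : c₁ ≤ 0) (hc₂ : c₂ ≤ 0)
    (hx2 : x < r₂) (hy2 : y < r₂) (hx1 : r₁ < x) (hy1 : r₁ < y)
    (ha : 0 ≤ a) (hb : 0 ≤ b) (hab : a + b = 1) :
    a*(c₀ + c₁*(r₂-x)⁻¹ + c₂*(x-r₁)⁻¹) + b*(c₀ + c₁*(r₂-y)⁻¹ + c₂*(y-r₁)⁻¹)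
      ≤ c₀ + c₁*(r₂-(a*x+b*y))⁻¹ + c₂*((a*x+b*y)-r₁)⁻¹ := by
  have i1 : (r₂ - (a*x+b*y))⁻¹ ≤ a*(r₂-x)⁻¹ + b*(r₂-y)⁻¹ := by
    have e : a*(r₂-x) + b*(r₂-y) = r₂ - (a*x+b*y) := by linear_combination r₂*hab
    rw [← e]
    exact amhm (r₂-x) (r₂-y) a b (by linarith) (by linarith) ha hb hab
  have i2 : ((a*x+b*y) - r₁)⁻¹ ≤ a*(x-r₁)⁻¹ + b*(y-r₁)⁻¹ := by
    have e : a*(x-r₁) + b*(y-r₁) = (a*x+b*y) - r₁ := by linear_combination (-r₁)*hab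
    rw [← e]
    exact amhm (x-r₁) (y-r₁) a b (by linarith) (by linarith) ha hb hab
  have e0 : a*c₀ + b*c₀ = c₀ := by linear_combination c₀*hab
  nlinarith [mul_nonneg (neg_nonneg.2 hc₁) (sub_nonneg.2 i1),
    mul_nonneg (neg_nonneg.2 hc₂) (sub_nonneg.2 i2), e0]


lemma Srep_gen (γ A r₁ r₂ w : ℝ) (hA : A ≠ 0) (h1 : r₂ - w ≠ 0) (h2 : w - r₁ ≠ 0)
    (h4 : r₂ - r₁ ≠ 0) :
    γ * (w*(1-w)) / (A*(r₂-w)*(w-r₁)) =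
      γ/A + (γ*(r₂*(1-r₂))/(A*(r₂-r₁)))*(r₂-w)⁻¹ + (γ*(r₁*(1-r₁))/(A*(r₂-r₁)))*(w-r₁)⁻¹ := by
  field_simp
  ring

set_option maxHeartbeats 1000000 in
/-- Quasiconcavity of the MRC rate along the line where the training
power equals the peak power. For `0 < ρ < ρmax`, `T > 0`, naturals `M > K ≥ 2` with
`K < T`, and `α₁ = ρmax·K/(ρT) < 1`, with `T_d(α) = T - (ρT/ρmax)α`,
`S(α) = α(1-α)ρ²T²(M-1)/(α(1-α)ρ²T²(K-1) + K(1-α)ρT + αρT·T_d(α) + T_d(α))` and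
`R(α) = (K/T)·T_d(α)·log₂(1 + S(α))`, every superlevel set
`{α ∈ [α₁, 1] : R(α) ≥ β}` is convex. -/
theorem stmt_16 (ρ ρmax T : ℝ) (hρ : 0 < ρ) (hρmax : 0 < ρmax) (hT : 0 < T)
    (hρρ : ρ < ρmax) (K M : ℕ) (hK : 2 ≤ K) (hMK : K < M) (hKT : (K : ℝ) < T)
    (α₁ : ℝ) (hα₁ : α₁ = ρmax * (K : ℝ) / (ρ * T)) (hα₁1 : α₁ < 1)
    (Td : ℝ → ℝ) (hTd : ∀ α, Td α = T - (ρ * T / ρmax) * α)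
    (S : ℝ → ℝ)
    (hS : ∀ α, S α =
      α * (1 - α) * ρ ^ 2 * T ^ 2 * ((M : ℝ) - 1) /
        (α * (1 - α) * ρ ^ 2 * T ^ 2 * ((K : ℝ) - 1) + (K : ℝ) * (1 - α) * ρ * T +
          α * ρ * T * Td α + Td α))
    (R : ℝ → ℝ)
    (hR : ∀ α, R α = ((K : ℝ) / T) * Td α * Real.logb 2 (1 + S α)) :
    ∀ β : ℝ, Convex ℝ {α ∈ Set.Icc α₁ 1 | β ≤ R α} := by
  intro β
  have hK0 : (0:ℝ) < (K:ℝ) := by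
    have : 0 < K := by omega
    exact_mod_cast this
  have hK1 : (1:ℝ) ≤ (K:ℝ) - 1 := by
    have : (2:ℝ) ≤ (K:ℝ) := by exact_mod_cast hK
    linarith
  have hM1 : (0:ℝ) < (M:ℝ) - 1 := by
    have : (K:ℝ) < (M:ℝ) := by exact_mod_cast hMK
    linarith
  have hα₁pos : 0 < α₁ := by
    rw [hα₁]; positivity
  have hA : 0 < ρ^2*T^2*((K:ℝ)-1) + ρ^2*T^2/ρmax := by
    have h1 : 0 < ρ^2*T^2 := by positivity
    have h2 : 0 < ρ^2*T^2/ρmax := by positivity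
    nlinarith
  have hC : 0 < (K:ℝ)*ρ*T + T := by positivity
  obtain ⟨r₁, r₂, hr₁0, hr₂0, hfq⟩ :=
    quad_fact (ρ^2*T^2*((K:ℝ)-1) + ρ^2*T^2/ρmax)
      (ρ^2*T^2*((K:ℝ)-1) - (K:ℝ)*ρ*T + ρ*T^2 - ρ*T/ρmax) ((K:ℝ)*ρ*T + T) hA hC
  have hfact : ∀ w : ℝ,
      w * (1 - w) * ρ ^ 2 * T ^ 2 * ((K : ℝ) - 1) + (K : ℝ) * (1 - w) * ρ * T +
        w * ρ * T * (T - ρ * T / ρmax * w) + (T - ρ * T / ρmax * w) =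
      (ρ^2*T^2*((K:ℝ)-1) + ρ^2*T^2/ρmax) * (r₂ - w) * (w - r₁) := by
    intro w
    rw [← hfq w]
    ring
  have hTd1 : 0 < T - ρ*T/ρmax := by
    rw [sub_pos, div_lt_iff₀ hρmax]
    nlinarith [mul_pos hT (sub_pos.mpr hρρ)]
  have hfac1 : 0 < (ρ^2*T^2*((K:ℝ)-1) + ρ^2*T^2/ρmax) * (r₂ - 1) * (1 - r₁) := by
    have h : (ρ^2*T^2*((K:ℝ)-1) + ρ^2*T^2/ρmax) * (r₂ - 1) * (1 - r₁) =
        ρ*T*(T - ρ*T/ρmax) + (T - ρ*T/ρmax) := by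
      linear_combination - hfact 1
    rw [h]
    nlinarith [mul_pos (mul_pos hρ hT) hTd1, hTd1]
  have hr₂1 : 1 < r₂ := by
    nlinarith [hfac1, mul_pos hA (show (0:ℝ) < 1 - r₁ by linarith)]
  have hrr : r₁ < r₂ := lt_trans hr₁0 hr₂0
  -- positivity of denominator on the interval
  have hDpos : ∀ w : ℝ, α₁ ≤ w → w ≤ 1 →
      0 < (ρ^2*T^2*((K:ℝ)-1) + ρ^2*T^2/ρmax) * (r₂ - w) * (w - r₁) := by
    intro w h1 h2
    have hw0 : 0 < w := lt_of_lt_of_le hα₁pos h1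
    exact mul_pos (mul_pos hA (by linarith)) (by linarith)
  -- partial-fraction representation of S
  have hSrep : ∀ w : ℝ, α₁ ≤ w → w ≤ 1 → S w =
      ρ^2*T^2*((M:ℝ)-1) / (ρ^2*T^2*((K:ℝ)-1) + ρ^2*T^2/ρmax) +
      (ρ^2*T^2*((M:ℝ)-1) * (r₂*(1-r₂)) /
        ((ρ^2*T^2*((K:ℝ)-1) + ρ^2*T^2/ρmax) * (r₂ - r₁))) * (r₂ - w)⁻¹ +
      (ρ^2*T^2*((M:ℝ)-1) * (r₁*(1-r₁)) /
        ((ρ^2*T^2*((K:ℝ)-1) + ρ^2*T^2/ρmax) * (r₂ - r₁))) * (w - r₁)⁻¹ := by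
    intro w h1 h2
    have hw0 : 0 < w := lt_of_lt_of_le hα₁pos h1
    have hne1 : r₂ - w ≠ 0 := by
      have : w < r₂ := lt_of_le_of_lt h2 hr₂1
      intro h; linarith [sub_eq_zero.mp h]
    have hne2 : w - r₁ ≠ 0 := by
      intro h; have := sub_eq_zero.mp h; linarith
    have hne3 : (ρ^2*T^2*((K:ℝ)-1) + ρ^2*T^2/ρmax) ≠ 0 := ne_of_gt hA
    have hne4 : r₂ - r₁ ≠ 0 := by
      intro h; have := sub_eq_zero.mp h; linarith
    rw [hS w, hTd w, hfact w]
    have hnum : w * (1 - w) * ρ ^ 2 * T ^ 2 * ((M:ℝ) - 1) =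
        ρ^2*T^2*((M:ℝ)-1) * (w*(1-w)) := by ring
    rw [hnum]
    exact Srep_gen _ _ _ _ _ (ne_of_gt hA) hne1 hne2 hne4
  -- c₁, c₂ nonpositive
  have hγ : 0 < ρ^2*T^2*((M:ℝ)-1) := by positivity
  have hden : (0:ℝ) ≤ (ρ^2*T^2*((K:ℝ)-1) + ρ^2*T^2/ρmax) * (r₂ - r₁) :=
    (mul_pos hA (by linarith)).le
  have hn1 : ρ^2*T^2*((M:ℝ)-1) * (r₂*(1-r₂)) ≤ 0 :=
    mul_nonpos_of_nonneg_of_nonpos hγ.le (by nlinarith [hr₂1, hr₂0])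
  have hn2 : ρ^2*T^2*((M:ℝ)-1) * (r₁*(1-r₁)) ≤ 0 :=
    mul_nonpos_of_nonneg_of_nonpos hγ.le (by nlinarith [hr₁0])
  have hc₁ : ρ^2*T^2*((M:ℝ)-1) * (r₂*(1-r₂)) /
      ((ρ^2*T^2*((K:ℝ)-1) + ρ^2*T^2/ρmax) * (r₂ - r₁)) ≤ 0 :=
    div_nonpos_of_nonpos_of_nonneg hn1 hden
  have hc₂ : ρ^2*T^2*((M:ℝ)-1) * (r₁*(1-r₁)) /
      ((ρ^2*T^2*((K:ℝ)-1) + ρ^2*T^2/ρmax) * (r₂ - r₁)) ≤ 0 :=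
    div_nonpos_of_nonpos_of_nonneg hn2 hden
  -- nonnegativity of S on the interval
  have hSnn : ∀ w : ℝ, α₁ ≤ w → w ≤ 1 → 0 ≤ S w := by
    intro w h1 h2
    have hw0 : 0 ≤ w := le_trans hα₁pos.le h1
    have hw1 : 0 ≤ 1 - w := by linarith
    rw [hS w, hTd w, hfact w]
    apply div_nonneg
    · exact mul_nonneg (mul_nonneg (mul_nonneg (mul_nonneg hw0 hw1)
        (pow_nonneg hρ.le 2)) (pow_nonneg hT.le 2)) hM1.le
    · exact (hDpos w h1 h2).le
  -- nonnegativity of Td on the interval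
  have hTdnn : ∀ w : ℝ, α₁ ≤ w → w ≤ 1 → 0 ≤ Td w := by
    intro w h1 h2
    rw [hTd w]
    have h0 : 0 < ρ*T/ρmax := by positivity
    nlinarith [mul_nonneg h0.le (show (0:ℝ) ≤ 1 - w by linarith), hTd1]
  -- main convexity argument
  intro x hx y hy a b ha hb hab
  obtain ⟨hxI, hxR⟩ := hx
  obtain ⟨hyI, hyR⟩ := hy
  obtain ⟨hx1, hx2⟩ := Set.mem_Icc.mp hxI
  obtain ⟨hy1, hy2⟩ := Set.mem_Icc.mp hyI
  simp only [smul_eq_mul]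
  have hz1 : α₁ ≤ a*x + b*y := by
    have e : a*α₁ + b*α₁ = α₁ := by linear_combination α₁*hab
    nlinarith [mul_le_mul_of_nonneg_left hx1 ha, mul_le_mul_of_nonneg_left hy1 hb]
  have hz2 : a*x + b*y ≤ 1 := by
    nlinarith [mul_le_mul_of_nonneg_left hx2 ha, mul_le_mul_of_nonneg_left hy2 hb]
  refine ⟨Set.mem_Icc.mpr ⟨hz1, hz2⟩, ?_⟩
  -- concavity step for S
  have hSz : a * S x + b * S y ≤ S (a*x + b*y) := by
    rw [hSrep x hx1 hx2, hSrep y hy1 hy2, hSrep (a*x+b*y) hz1 hz2]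
    exact concave_comb _ _ _ r₁ r₂ x y a b hc₁ hc₂
      (lt_of_le_of_lt hx2 hr₂1) (lt_of_le_of_lt hy2 hr₂1)
      (lt_of_lt_of_le hr₁0 (le_trans hα₁pos.le hx1))
      (lt_of_lt_of_le hr₁0 (le_trans hα₁pos.le hy1)) ha hb hab
  -- concavity step for logb
  have p1 : 0 < 1 + S x := by linarith [hSnn x hx1 hx2]
  have p2 : 0 < 1 + S y := by linarith [hSnn y hy1 hy2]
  have pz : 0 < 1 + S (a*x+b*y) := by linarith [hSnn (a*x+b*y) hz1 hz2]
  have hgz : a * Real.logb 2 (1 + S x) + b * Real.logb 2 (1 + S y) ≤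
      Real.logb 2 (1 + S (a*x+b*y)) := by
    have l1 := logconc (1+S x) (1+S y) a b p1 p2 ha hb hab
    have hcomb : 0 < a*(1+S x) + b*(1+S y) := by
      rcases lt_or_eq_of_le ha with h'|h'
      · nlinarith [mul_pos h' p1, mul_nonneg hb p2.le]
      · have hb1 : b = 1 := by linarith
        rw [← h', hb1]; simpa using p2
    have l2 : Real.log (a*(1+S x) + b*(1+S y)) ≤ Real.log (1 + S (a*x+b*y)) := by
      apply Real.log_le_log hcomb
      nlinarith [hSz]
    have hlog2 : 0 < Real.log 2 := Real.log_pos one_lt_two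
    simp only [Real.logb]
    have e : a*(Real.log (1+S x)/Real.log 2) + b*(Real.log (1+S y)/Real.log 2) =
        (a*Real.log (1+S x) + b*Real.log (1+S y))/Real.log 2 := by ring
    rw [e]
    exact (div_le_div_iff_of_pos_right hlog2).mpr (le_trans l1 l2)
  -- nonnegativity of logs
  have hgxnn : 0 ≤ Real.logb 2 (1 + S x) :=
    Real.logb_nonneg one_lt_two (by linarith [hSnn x hx1 hx2])
  have hgynn : 0 ≤ Real.logb 2 (1 + S y) :=
    Real.logb_nonneg one_lt_two (by linarith [hSnn y hy1 hy2])
  -- Td is affine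
  have hTdz : Td (a*x+b*y) = a*Td x + b*Td y := by
    rw [hTd, hTd, hTd]
    linear_combination (-T)*hab
  -- pull back the level β
  have hm1 : β*(T/(K:ℝ)) ≤ Td x * Real.logb 2 (1 + S x) := by
    rw [hR x] at hxR
    have h := mul_le_mul_of_nonneg_left hxR (le_of_lt (div_pos hT hK0))
    calc β*(T/(K:ℝ)) = (T/(K:ℝ))*β := by ring
      _ ≤ (T/(K:ℝ))*((K:ℝ)/T*Td x*Real.logb 2 (1 + S x)) := h
      _ = Td x * Real.logb 2 (1 + S x) := by field_simp
  have hm2 : β*(T/(K:ℝ)) ≤ Td y * Real.logb 2 (1 + S y) := by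
    rw [hR y] at hyR
    have h := mul_le_mul_of_nonneg_left hyR (le_of_lt (div_pos hT hK0))
    calc β*(T/(K:ℝ)) = (T/(K:ℝ))*β := by ring
      _ ≤ (T/(K:ℝ))*((K:ℝ)/T*Td y*Real.logb 2 (1 + S y)) := h
      _ = Td y * Real.logb 2 (1 + S y) := by field_simp
  have hfin := prodmin (Td x) (Td y) (Real.logb 2 (1 + S x)) (Real.logb 2 (1 + S y))
    a b (β*(T/(K:ℝ))) (hTdnn x hx1 hx2) (hTdnn y hy1 hy2) hgxnn hgynn hm1 hm2 ha hb hab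
  rw [← hTdz] at hfin
  have hfin2 : β*(T/(K:ℝ)) ≤ Td (a*x+b*y) * Real.logb 2 (1 + S (a*x+b*y)) :=
    le_trans hfin (mul_le_mul_of_nonneg_left hgz (hTdnn (a*x+b*y) hz1 hz2))
  rw [hR]
  calc β = ((K:ℝ)/T)*(β*(T/(K:ℝ))) := by field_simp
    _ ≤ ((K:ℝ)/T)*(Td (a*x+b*y) * Real.logb 2 (1 + S (a*x+b*y))) :=
        mul_le_mul_of_nonneg_left hfin2 (by positivity)
    _ = ((K:ℝ)/T)*Td (a*x+b*y) * Real.logb 2 (1 + S (a*x+b*y)) := by ring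
end

section
/- Let ρ, ρmax, T be positive reals with ρ < ρmax, and let K, M be natural numbers with M > K ≥ 2 and K < T. Define S(α, T_d) = α(1−α)ρ²T²(M−1) / (α(1−α)ρ²T²(K−1) + K(1−α)ρT + αρT·T_d + T_d), R(α, T_d) = (K·T_d/T)·log₂(1 + S(α, T_d)), and the feasible set F = {(α, T_d) : 0 ≤ α ≤ 1, 0 < T_d ≤ T − K, ρTα + ρmax·T_d ≤ ρmax·T, ρTα + ρmax·T_d ≥ ρT}. Let α† ∈ (0, 1) be a maximizer of α ↦ S(α, T − K) over (0, 1), and set α₂ = 1 − ρmax·(T − K)/(ρT). If α† < α₂, then R(α, T_d) ≤ R(α₂, T − K) for every (α, T_d) ∈ F; i.e., (α₂, T − K) is a global maximizer of R over F. -/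
lemma log1p_sub_le (u v : ℝ) (hv : 0 ≤ v) (huv : v ≤ u) :
    Real.log (1+u) - Real.log (1+v) ≤ (u - v)/(1+v) := by
  have hv1 : (0:ℝ) < 1 + v := by linarith
  have hu1 : (0:ℝ) < 1 + u := by linarith
  have h := Real.log_le_sub_one_of_pos (x := (1+u)/(1+v)) (by positivity)
  rw [Real.log_div (by linarith) (by linarith)] at h
  have h2 : (1+u)/(1+v) - 1 = (u - v)/(1+v) := by field_simp; ring
  linarith [h2 ▸ h]

lemma le_log1p (v : ℝ) (hv : 0 ≤ v) : v/(1+v) ≤ Real.log (1+v) := by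
  have hv1 : (0:ℝ) < 1 + v := by linarith
  have h := Real.log_le_sub_one_of_pos (x := (1+v)⁻¹) (by positivity)
  rw [Real.log_inv] at h
  have h2 : (1+v)⁻¹ - 1 = -(v/(1+v)) := by field_simp; ring
  linarith

lemma tlog_mono (N D0 D1 s t : ℝ) (hN : 0 ≤ N) (hD0 : 0 ≤ D0) (hD1 : 0 < D1)
    (hs : 0 < s) (hst : s ≤ t) :
    s * Real.log (1 + N/(D0 + D1*s)) ≤ t * Real.log (1 + N/(D0 + D1*t)) := by
  have hds : 0 < D0 + D1*s := by nlinarith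
  have hdt : 0 < D0 + D1*t := by nlinarith
  set u := N/(D0 + D1*s) with hu
  set v := N/(D0 + D1*t) with hv
  have hv0 : 0 ≤ v := div_nonneg hN hdt.le
  have hu0 : 0 ≤ u := div_nonneg hN hds.le
  have hvu : v ≤ u := by rw [hu, hv]; gcongr
  have hv1 : (0:ℝ) < 1 + v := by linarith
  have hkey : s*(u-v) ≤ (t-s)*v := by
    have huv : u - v = N*D1*(t-s)/((D0+D1*s)*(D0+D1*t)) := by
      rw [hu, hv]; field_simp; ring
    rw [huv, hv, ← mul_div_assoc, ← mul_div_assoc,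
      div_le_div_iff₀ (by positivity) hdt]
    nlinarith [mul_nonneg (mul_nonneg (mul_nonneg (sub_nonneg.2 hst) hN) hdt.le) hD0]
  have h1 := log1p_sub_le u v hv0 hvu
  have h2 := le_log1p v hv0
  have c1 : s * Real.log (1+u) ≤ s * (Real.log (1+v) + (u-v)/(1+v)) :=
    mul_le_mul_of_nonneg_left (by linarith) hs.le
  have c2 : s*((u-v)/(1+v)) ≤ (t-s)*(v/(1+v)) := by
    rw [← mul_div_assoc, ← mul_div_assoc, div_le_div_iff₀ hv1 hv1]
    nlinarith
  have c3 : (t-s)*(v/(1+v)) ≤ (t-s)*Real.log (1+v) :=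
    mul_le_mul_of_nonneg_left h2 (by linarith)
  nlinarith

lemma S_compare (A B q r a b c : ℝ) (hA : 0 < A) (hB : 0 ≤ B) (hq : 0 < q) (hr : 0 < r)
    (ha0 : 0 < a) (hab : a < b) (hbc : b ≤ c) (hc1 : c < 1)
    (H : A*(c*(1-c)) / (B*(c*(1-c)) + q*(1-c) + r*c)
        ≤ A*(a*(1-a)) / (B*(a*(1-a)) + q*(1-a) + r*a)) :
    A*(c*(1-c)) / (B*(c*(1-c)) + q*(1-c) + r*c)
      ≤ A*(b*(1-b)) / (B*(b*(1-b)) + q*(1-b) + r*b) := by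
  have hb0 : 0 < b := lt_trans ha0 hab
  have hc0 : 0 < c := lt_of_lt_of_le hb0 hbc
  have hac : a < c := lt_of_lt_of_le hab hbc
  have h1c : 0 < 1 - c := by linarith
  have h1b : 0 < 1 - b := by linarith
  have h1a : 0 < 1 - a := by linarith
  have dena : 0 < B*(a*(1-a)) + q*(1-a) + r*a := by
    have : 0 ≤ B*(a*(1-a)) := by positivity
    nlinarith [mul_pos hq h1a, mul_pos hr ha0]
  have denb : 0 < B*(b*(1-b)) + q*(1-b) + r*b := by
    have : 0 ≤ B*(b*(1-b)) := by positivity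
    nlinarith [mul_pos hq h1b, mul_pos hr hb0]
  have denc : 0 < B*(c*(1-c)) + q*(1-c) + r*c := by
    have : 0 ≤ B*(c*(1-c)) := by positivity
    nlinarith [mul_pos hq h1c, mul_pos hr hc0]
  rw [div_le_div_iff₀ denc dena] at H
  have key : q*(1-a)*(1-c) ≤ r*(a*c) := by
    nlinarith [H, mul_pos hA (sub_pos.2 hac)]
  have key2 : q*(1-b)*(1-c) ≤ r*(b*c) := by
    nlinarith [key, mul_nonneg (mul_nonneg hq.le h1c.le) (sub_nonneg.2 hab.le),
      mul_nonneg (mul_nonneg hr.le hc0.le) (sub_nonneg.2 hab.le)]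
  rw [div_le_div_iff₀ denc denb]
  nlinarith [mul_nonneg (mul_nonneg hA.le (sub_nonneg.2 hbc)) (sub_nonneg.2 key2)]

set_option maxHeartbeats 2000000 in
/-- Case 2 of Theorem 1 (data power limited by the peak power).
If the unconstrained maximizer α† at T_d = T - K satisfies α† < α₂ with
α₂ = 1 - ρmax(T-K)/(ρT), then (α₂, T - K) is a global maximizer of R over the
feasible set F. -/
theorem stmt_17 (ρ ρmax T : ℝ) (hρ : 0 < ρ) (hρmax : 0 < ρmax) (hT : 0 < T)
    (hρρ : ρ < ρmax) (K M : ℕ) (hK : 2 ≤ K) (hMK : K < M) (hKT : (K : ℝ) < T)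
    (S : ℝ → ℝ → ℝ)
    (hS : ∀ α Td, S α Td =
      α * (1 - α) * ρ ^ 2 * T ^ 2 * ((M : ℝ) - 1) /
        (α * (1 - α) * ρ ^ 2 * T ^ 2 * ((K : ℝ) - 1) + (K : ℝ) * (1 - α) * ρ * T +
          α * ρ * T * Td + Td))
    (R : ℝ → ℝ → ℝ)
    (hR : ∀ α Td, R α Td = ((K : ℝ) * Td / T) * Real.logb 2 (1 + S α Td))
    (F : Set (ℝ × ℝ))
    (hF : F = {p : ℝ × ℝ | 0 ≤ p.1 ∧ p.1 ≤ 1 ∧ 0 < p.2 ∧ p.2 ≤ T - (K : ℝ) ∧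
      ρ * T * p.1 + ρmax * p.2 ≤ ρmax * T ∧ ρ * T ≤ ρ * T * p.1 + ρmax * p.2})
    (αd : ℝ) (hαd : αd ∈ Set.Ioo (0 : ℝ) 1)
    (hαdmax : ∀ α ∈ Set.Ioo (0 : ℝ) 1, S α (T - (K : ℝ)) ≤ S αd (T - (K : ℝ)))
    (α₂ : ℝ) (hα₂ : α₂ = 1 - ρmax * (T - (K : ℝ)) / (ρ * T))
    (hcase : αd < α₂) :
    ∀ p ∈ F, R p.1 p.2 ≤ R α₂ (T - (K : ℝ)) := by
  intro p hp
  rw [hF] at hp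
  obtain ⟨hα0, hα1, hTd0, hTdTK, hup, hlo⟩ := hp
  set α := p.1
  set Td := p.2
  have hK2 : (2:ℝ) ≤ (K:ℝ) := by exact_mod_cast hK
  have hM : (K:ℝ) + 1 ≤ (M:ℝ) := by exact_mod_cast hMK
  have hTK : (0:ℝ) < T - (K:ℝ) := by linarith
  have hρT : 0 < ρ * T := by positivity
  obtain ⟨hαd0, hαd1⟩ := hαd
  have hα₂1 : α₂ < 1 := by
    rw [hα₂]
    have : 0 < ρmax * (T - (K:ℝ)) / (ρ * T) := by positivity
    linarith
  have hα₂0 : 0 < α₂ := lt_trans hαd0 hcase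
  have hαα₂ : α₂ ≤ α := by
    have h1 : ρ * T * α₂ = ρ * T - ρmax * (T - (K:ℝ)) := by rw [hα₂]; field_simp
    have h2 : ρ * T * α₂ ≤ ρ * T * α := by nlinarith
    exact le_of_mul_le_mul_left (by linarith [h2]) hρT
  have hαpos : 0 < α := lt_of_lt_of_le hα₂0 hαα₂
  have h1α : (0:ℝ) ≤ 1 - α := by linarith
  have hlog2 : 0 < Real.log 2 := Real.log_pos one_lt_two
  -- canonical form constants
  have hApos : 0 < ρ^2*T^2*((M:ℝ)-1) := by
    have h1 : (0:ℝ) < (M:ℝ) - 1 := by linarith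
    positivity
  have hBpos : 0 < ρ^2*T^2*((K:ℝ)-1) := by
    have h1 : (0:ℝ) < (K:ℝ) - 1 := by linarith
    positivity
  have hqpos : 0 < (K:ℝ)*ρ*T + (T-(K:ℝ)) := by positivity
  have hrpos : 0 < ρ*T*(T-(K:ℝ)) + (T-(K:ℝ)) := by positivity
  have hSc : ∀ x, S x (T-(K:ℝ)) =
      (ρ^2*T^2*((M:ℝ)-1))*(x*(1-x)) /
        ((ρ^2*T^2*((K:ℝ)-1))*(x*(1-x)) + ((K:ℝ)*ρ*T + (T-(K:ℝ)))*(1-x)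
          + (ρ*T*(T-(K:ℝ)) + (T-(K:ℝ)))*x) := by
    intro x
    rw [hS]
    congr 1 <;> ring
  -- nonnegativity of S on [0,1] at Td = T-K
  have hSnonneg : ∀ x, 0 ≤ x → x ≤ 1 → 0 ≤ S x (T-(K:ℝ)) := by
    intro x hx0 hx1
    rw [hSc]
    have hnum : 0 ≤ (ρ^2*T^2*((M:ℝ)-1))*(x*(1-x)) :=
      mul_nonneg hApos.le (mul_nonneg hx0 (by linarith))
    have hden : 0 < (ρ^2*T^2*((K:ℝ)-1))*(x*(1-x)) + ((K:ℝ)*ρ*T + (T-(K:ℝ)))*(1-x)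
        + (ρ*T*(T-(K:ℝ)) + (T-(K:ℝ)))*x := by
      have h1 : 0 ≤ (ρ^2*T^2*((K:ℝ)-1))*(x*(1-x)) :=
        mul_nonneg hBpos.le (mul_nonneg hx0 (by linarith))
      nlinarith [mul_nonneg hqpos.le (show (0:ℝ) ≤ 1-x by linarith),
        mul_nonneg hrpos.le hx0, mul_pos hqpos hrpos]
    exact div_nonneg hnum hden.le
  -- Step 1: R α Td ≤ R α (T-K)
  have hstep1 : R α Td ≤ R α (T-(K:ℝ)) := by
    set N := α*(1-α)*ρ^2*T^2*((M:ℝ)-1) with hN_def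
    set D0 := α*(1-α)*ρ^2*T^2*((K:ℝ)-1) + (K:ℝ)*(1-α)*ρ*T with hD0_def
    set D1 := α*ρ*T + 1 with hD1_def
    have hSα : ∀ t, S α t = N/(D0 + D1*t) := by
      intro t
      rw [hS, hN_def, hD0_def, hD1_def]
      congr 1
      ring
    have hN0 : 0 ≤ N := by
      rw [hN_def]
      have hM1 : (0:ℝ) ≤ (M:ℝ) - 1 := by linarith
      exact mul_nonneg (mul_nonneg (mul_nonneg (mul_nonneg hα0 h1α)
        (sq_nonneg ρ)) (sq_nonneg T)) hM1
    have hD00 : 0 ≤ D0 := by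
      rw [hD0_def]
      have hK1 : (0:ℝ) ≤ (K:ℝ) - 1 := by linarith
      have h1 : 0 ≤ α * (1 - α) * ρ ^ 2 * T ^ 2 * ((K:ℝ) - 1) :=
        mul_nonneg (mul_nonneg (mul_nonneg (mul_nonneg hα0 h1α)
          (sq_nonneg ρ)) (sq_nonneg T)) hK1
      have h2 : 0 ≤ (K:ℝ) * (1 - α) * ρ * T := by
        have : (0:ℝ) ≤ (K:ℝ) := by linarith
        exact mul_nonneg (mul_nonneg (mul_nonneg this h1α) hρ.le) hT.le
      linarith
    have hD10 : 0 < D1 := by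
      rw [hD1_def]
      linarith [mul_nonneg (mul_nonneg hα0 hρ.le) hT.le]
    have hmono := tlog_mono N D0 D1 Td (T-(K:ℝ)) hN0 hD00 hD10 hTd0 hTdTK
    have hfac : (0:ℝ) ≤ (K:ℝ)/(T*Real.log 2) := by positivity
    have hmul := mul_le_mul_of_nonneg_left hmono hfac
    have e1 : R α Td = (K:ℝ)/(T*Real.log 2) * (Td * Real.log (1 + N/(D0 + D1*Td))) := by
      rw [hR, hSα, Real.logb]
      field_simp
    have e2 : R α (T-(K:ℝ)) = (K:ℝ)/(T*Real.log 2)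
        * ((T-(K:ℝ)) * Real.log (1 + N/(D0 + D1*(T-(K:ℝ))))) := by
      rw [hR, hSα, Real.logb]
      field_simp
    rw [e1, e2]
    exact hmul
  -- Step 2 : R α (T-K) ≤ R α₂ (T-K)
  have hSle : S α (T-(K:ℝ)) ≤ S α₂ (T-(K:ℝ)) := by
    rcases eq_or_lt_of_le hα1 with heq | hlt
    · have hz : S α (T-(K:ℝ)) = 0 := by
        rw [heq, hS]
        norm_num
      rw [hz]
      exact hSnonneg α₂ hα₂0.le hα₂1.le
    · have hαIoo : α ∈ Set.Ioo (0:ℝ) 1 := ⟨hαpos, hlt⟩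
      have H := hαdmax α hαIoo
      rw [hSc, hSc] at H ⊢
      exact S_compare _ _ _ _ αd α₂ α hApos hBpos.le hqpos hrpos hαd0 hcase hαα₂ hlt H
  have hfac2 : (0:ℝ) ≤ (K:ℝ)*(T-(K:ℝ))/T := by positivity
  have hlogle : Real.logb 2 (1 + S α (T-(K:ℝ))) ≤ Real.logb 2 (1 + S α₂ (T-(K:ℝ))) := by
    have h1 : 0 < 1 + S α (T-(K:ℝ)) := by
      linarith [hSnonneg α hα0 hα1]
    exact Real.logb_le_logb_of_le one_lt_two h1 (by linarith)
  have hstep2 : R α (T-(K:ℝ)) ≤ R α₂ (T-(K:ℝ)) := by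
    rw [hR, hR]
    exact mul_le_mul_of_nonneg_left hlogle hfac2
  linarith
end

section
/- Let ρ, ρmax, T be positive reals with ρ < ρmax, and let K, M be natural numbers with M > K ≥ 2 and K < T. Define S(α, T_d) = α(1−α)ρ²T²(M−1) / (α(1−α)ρ²T²(K−1) + K(1−α)ρT + αρT·T_d + T_d), R(α, T_d) = (K·T_d/T)·log₂(1 + S(α, T_d)), and the feasible set F = {(α, T_d) : 0 ≤ α ≤ 1, 0 < T_d ≤ T − K, ρTα + ρmax·T_d ≤ ρmax·T, ρTα + ρmax·T_d ≥ ρT}. Let α† ∈ (0, 1) be a maximizer of α ↦ S(α, T − K) over (0, 1), and set α₁ = ρmax·K/(ρT) and α₂ = 1 − ρmax·(T − K)/(ρT). If α₂ < α† < α₁, then R(α, T_d) ≤ R(α†, T − K) for every (α, T_d) ∈ F; i.e., (α†, T − K) is a global maximizer of R over F. -/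
/-- Case 3 of Theorem 1 (neither power limited by the peak power).
If α₂ < α† < α₁ with α₁ = ρmax·K/(ρT) and α₂ = 1 - ρmax(T-K)/(ρT), then
(α†, T - K) is a global maximizer of R over the feasible set F. -/
theorem stmt_18 (ρ ρmax T : ℝ) (hρ : 0 < ρ) (hρmax : 0 < ρmax) (hT : 0 < T)
    (hρρ : ρ < ρmax) (K M : ℕ) (hK : 2 ≤ K) (hMK : K < M) (hKT : (K : ℝ) < T)
    (S : ℝ → ℝ → ℝ)
    (hS : ∀ α Td, S α Td =
      α * (1 - α) * ρ ^ 2 * T ^ 2 * ((M : ℝ) - 1) /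
        (α * (1 - α) * ρ ^ 2 * T ^ 2 * ((K : ℝ) - 1) + (K : ℝ) * (1 - α) * ρ * T +
          α * ρ * T * Td + Td))
    (R : ℝ → ℝ → ℝ)
    (hR : ∀ α Td, R α Td = ((K : ℝ) * Td / T) * Real.logb 2 (1 + S α Td))
    (F : Set (ℝ × ℝ))
    (hF : F = {p : ℝ × ℝ | 0 ≤ p.1 ∧ p.1 ≤ 1 ∧ 0 < p.2 ∧ p.2 ≤ T - (K : ℝ) ∧
      ρ * T * p.1 + ρmax * p.2 ≤ ρmax * T ∧ ρ * T ≤ ρ * T * p.1 + ρmax * p.2})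
    (αd : ℝ) (hαd : αd ∈ Set.Ioo (0 : ℝ) 1)
    (hαdmax : ∀ α ∈ Set.Ioo (0 : ℝ) 1, S α (T - (K : ℝ)) ≤ S αd (T - (K : ℝ)))
    (α₁ : ℝ) (hα₁ : α₁ = ρmax * (K : ℝ) / (ρ * T))
    (α₂ : ℝ) (hα₂ : α₂ = 1 - ρmax * (T - (K : ℝ)) / (ρ * T))
    (hcase₁ : α₂ < αd) (hcase₂ : αd < α₁) :
    ∀ p ∈ F, R p.1 p.2 ≤ R αd (T - (K : ℝ)) := by
  obtain ⟨hαd0, hαd1⟩ := hαd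
  set Λ : ℝ := T - (K : ℝ) with hΛdef
  have hΛpos : 0 < Λ := by simp [hΛdef]; linarith
  have hK1 : (1 : ℝ) ≤ (K : ℝ) := by
    have : (2 : ℝ) ≤ (K : ℝ) := by exact_mod_cast hK
    linarith
  have hM1 : (0 : ℝ) ≤ (M : ℝ) - 1 := by
    have : (2 : ℝ) < (M : ℝ) := by exact_mod_cast lt_of_le_of_lt hK hMK
    linarith
  -- nonnegativity of S
  have hSnn : ∀ α Td, 0 ≤ α → α ≤ 1 → 0 < Td → 0 ≤ S α Td := by
    intro α Td h0 h1 hTd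
    rw [hS]
    have hnum : 0 ≤ α * (1 - α) * ρ ^ 2 * T ^ 2 * ((M : ℝ) - 1) := by
      have : 0 ≤ α * (1 - α) := mul_nonneg h0 (by linarith)
      positivity
    have hden : 0 < α * (1 - α) * ρ ^ 2 * T ^ 2 * ((K : ℝ) - 1) +
        (K : ℝ) * (1 - α) * ρ * T + α * ρ * T * Td + Td := by
      have h1' : 0 ≤ α * (1 - α) * ρ ^ 2 * T ^ 2 * ((K : ℝ) - 1) := by
        have : 0 ≤ α * (1 - α) := mul_nonneg h0 (by linarith)
        have : 0 ≤ (K : ℝ) - 1 := by linarith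
        positivity
      have h2' : 0 ≤ (K : ℝ) * (1 - α) * ρ * T := by
        have : 0 ≤ 1 - α := by linarith
        positivity
      have h3' : 0 ≤ α * ρ * T * Td := by positivity
      linarith
    positivity
  have hSαdnn : 0 ≤ S αd Λ := hSnn αd Λ hαd0.le hαd1.le hΛpos
  -- Step A : for α ∈ [0,1], R α Λ ≤ R αd Λ
  have stepA : ∀ α, 0 ≤ α → α ≤ 1 → R α Λ ≤ R αd Λ := by
    intro α h0 h1
    rcases eq_or_lt_of_le h0 with h0e | h0s
    · rw [hR, hR, hS, ← h0e]
      simp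
      have : 0 ≤ ((K : ℝ) * Λ / T) * Real.logb 2 (1 + S αd Λ) :=
        mul_nonneg (by positivity) (Real.logb_nonneg one_lt_two (by linarith))
      linarith
    rcases eq_or_lt_of_le h1 with h1e | h1s
    · rw [hR, hR, hS, h1e]
      simp
      have : 0 ≤ ((K : ℝ) * Λ / T) * Real.logb 2 (1 + S αd Λ) :=
        mul_nonneg (by positivity) (Real.logb_nonneg one_lt_two (by linarith))
      linarith
    · rw [hR, hR]
      have hle := hαdmax α ⟨h0s, h1s⟩
      have hSα := hSnn α Λ h0 h1 hΛpos
      apply mul_le_mul_of_nonneg_left _ (by positivity)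
      exact Real.logb_le_logb_of_le one_lt_two (by linarith) (by linarith)
  -- Step B : for α ∈ [0,1], 0 < Td ≤ Λ, R α Td ≤ R α Λ
  have stepB : ∀ α Td, 0 ≤ α → α ≤ 1 → 0 < Td → Td ≤ Λ → R α Td ≤ R α Λ := by
    intro α Td h0 h1 hTd hTdΛ
    set N := α * (1 - α) * ρ ^ 2 * T ^ 2 * ((M : ℝ) - 1) with hN
    set C := α * (1 - α) * ρ ^ 2 * T ^ 2 * ((K : ℝ) - 1) + (K : ℝ) * (1 - α) * ρ * T with hC
    set b := α * ρ * T + 1 with hb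
    have hNnn : 0 ≤ N := by
      have : 0 ≤ α * (1 - α) := mul_nonneg h0 (by linarith)
      positivity
    have hCnn : 0 ≤ C := by
      have ha : 0 ≤ α * (1 - α) := mul_nonneg h0 (by linarith)
      have hk : 0 ≤ (K : ℝ) - 1 := by linarith
      have h1' : 0 ≤ α * (1 - α) * ρ ^ 2 * T ^ 2 * ((K : ℝ) - 1) := by positivity
      have h2' : 0 ≤ (K : ℝ) * (1 - α) * ρ * T := by
        have : 0 ≤ 1 - α := by linarith
        positivity
      linarith
    have hbpos : 0 < b := by
      have : 0 ≤ α * ρ * T := by positivity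
      simp [hb]; linarith
    have hSrw : ∀ t : ℝ, S α t = N / (C + b * t) := by
      intro t; rw [hS]; congr 1; ring
    have hD1 : 0 < C + b * Td := by have := mul_pos hbpos hTd; linarith
    have hD2 : 0 < C + b * Λ := by have := mul_pos hbpos hΛpos; linarith
    set u := N / (C + b * Λ) with hu
    set v := N / (C + b * Td) with hv
    have hunn : 0 ≤ u := div_nonneg hNnn hD2.le
    have hvnn : 0 ≤ v := div_nonneg hNnn hD1.le
    set r := Λ / Td with hr
    have hr1 : 1 ≤ r := (one_le_div hTd).mpr hTdΛ
    -- v ≤ r * u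
    have hkey : v ≤ r * u := by
      rw [hv, hr, hu, div_mul_div_comm, div_le_div_iff₀ hD1 (by exact mul_pos hTd hD2)]
      nlinarith [mul_nonneg hNnn hCnn, mul_nonneg (mul_nonneg hNnn hCnn) (sub_nonneg.mpr hTdΛ)]
    -- Bernoulli
    have hbern : 1 + r * u ≤ (1 + u) ^ r :=
      one_add_mul_self_le_rpow_one_add (by linarith) hr1
    have hlog1 : Real.logb 2 (1 + v) ≤ Real.logb 2 ((1 + u) ^ r) :=
      Real.logb_le_logb_of_le one_lt_two (by linarith) (by linarith)
    rw [Real.logb_rpow_eq_mul_logb_of_pos (by linarith)] at hlog1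
    rw [hR, hR, hSrw, hSrw, ← hu, ← hv]
    have hfac : (K : ℝ) * Td / T * r = (K : ℝ) * Λ / T := by
      field_simp [hr]
      rw [hr]; field_simp [hTd.ne']
    calc (K : ℝ) * Td / T * Real.logb 2 (1 + v)
        ≤ (K : ℝ) * Td / T * (r * Real.logb 2 (1 + u)) :=
          mul_le_mul_of_nonneg_left hlog1 (div_nonneg (mul_nonneg (Nat.cast_nonneg K) hTd.le) hT.le)
      _ = (K : ℝ) * Λ / T * Real.logb 2 (1 + u) := by rw [← mul_assoc, hfac]
  -- conclude
  rintro ⟨α, Td⟩ hp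
  rw [hF] at hp
  obtain ⟨h0, h1, hTd, hTdΛ, -, -⟩ := hp
  exact le_trans (stepB α Td h0 h1 hTd hTdΛ) (stepA α h0 h1)
end

section
/- Let ρ, ρmax, T be positive reals with ρ < ρmax, and let K, M be natural numbers with M > K ≥ 2 and K < T. Define S(α, T_d) = α(1−α)ρ²T²(M−1) / (α(1−α)ρ²T²(K−1) + K(1−α)ρT + αρT·T_d + T_d), R(α, T_d) = (K·T_d/T)·log₂(1 + S(α, T_d)), and the feasible set F = {(α, T_d) : 0 ≤ α ≤ 1, 0 < T_d ≤ T − K, ρTα + ρmax·T_d ≤ ρmax·T, ρTα + ρmax·T_d ≥ ρT}. Let α† ∈ (0, 1) be a maximizer of α ↦ S(α, T − K) over (0, 1), and set α₁ = ρmax·K/(ρT); assume α₁ < α† (so in particular α₁ < 1). Then the maximum of R over F is attained on the segment where the training-power peak constraint is active: there exists α' ∈ [α₁, 1] such that (α', T − (ρT/ρmax)·α') ∈ F and R(α', T − (ρT/ρmax)·α') ≥ R(α, T_d) for every (α, T_d) ∈ F. -/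
open Real Set

lemma aux_log_mono (N : ℝ) (hN : 0 ≤ N) {t u : ℝ} (ht : 0 < t) (htu : t ≤ u) :
    t * Real.log (1 + N / t) ≤ u * Real.log (1 + N / u) := by
  have hu : 0 < u := lt_of_lt_of_le ht htu
  have h1 : (0:ℝ) < 1 + N / t := by positivity
  have hconc := strictConcaveOn_log_Ioi.concaveOn
  have h2 := hconc.2 (Set.mem_Ioi.2 h1) (Set.mem_Ioi.2 one_pos)
      (by positivity : (0:ℝ) ≤ t / u)
      (by rw [sub_nonneg]; exact div_le_one_of_le₀ htu hu.le : (0:ℝ) ≤ 1 - t / u)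
      (by ring)
  simp only [smul_eq_mul, mul_one, Real.log_one, mul_zero, add_zero] at h2
  have hcomb : t / u * (1 + N / t) + (1 - t / u) = 1 + N / u := by
    field_simp; ring
  rw [hcomb] at h2
  have h3 := mul_le_mul_of_nonneg_left h2 hu.le
  calc t * Real.log (1 + N / t) = u * (t / u * Real.log (1 + N / t)) := by
        field_simp
    _ ≤ u * Real.log (1 + N / u) := h3

lemma aux_mono (N P Q x y : ℝ) (hN : 0 ≤ N) (hP : 0 ≤ P) (hQ : 0 < Q)
    (hx : 0 < x) (hxy : x ≤ y) :
    x * Real.logb 2 (1 + N / (P + Q * x)) ≤ y * Real.logb 2 (1 + N / (P + Q * y)) := by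
  have ht : 0 < P + Q * x := by positivity
  have hu : 0 < P + Q * y := by nlinarith
  have htu : P + Q * x ≤ P + Q * y := by nlinarith
  have h1 := aux_log_mono N hN ht htu
  have hdiv : N / (P + Q * y) ≤ N / (P + Q * x) := by
    rw [div_le_div_iff₀ hu ht]; nlinarith
  have hLle : Real.log (1 + N / (P + Q * y)) ≤ Real.log (1 + N / (P + Q * x)) := by
    apply Real.log_le_log (by positivity); linarith
  have key : Q * x * Real.log (1 + N / (P + Q * x)) ≤
      Q * y * Real.log (1 + N / (P + Q * y)) := by
    nlinarith [mul_le_mul_of_nonneg_left hLle hP]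
  have key2 : x * Real.log (1 + N / (P + Q * x)) ≤ y * Real.log (1 + N / (P + Q * y)) := by
    have := (mul_le_mul_iff_right₀ hQ).mp (by nlinarith : Q * (x * Real.log (1 + N / (P + Q * x))) ≤ Q * (y * Real.log (1 + N / (P + Q * y))))
    exact this
  have hlog2 : (0:ℝ) < Real.log 2 := Real.log_pos one_lt_two
  rw [Real.logb, Real.logb, mul_div_assoc', mul_div_assoc',
    div_le_div_iff_of_pos_right hlog2]
  exact key2

lemma aux_qc (A B C D E : ℝ) (hA : 0 ≤ A) (hB : 0 ≤ B) (hC : 0 ≤ C) (hD : 0 ≤ D) (hE : 0 < E)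
    (x y z : ℝ) (hx : 0 ≤ x) (hxy : x ≤ y) (hyz : y ≤ z) (hz : z ≤ 1)
    (h : A * x * (1 - x) / (B * x * (1 - x) + C * (1 - x) + D * x + E) ≤
        A * z * (1 - z) / (B * z * (1 - z) + C * (1 - z) + D * z + E)) :
    A * x * (1 - x) / (B * x * (1 - x) + C * (1 - x) + D * x + E) ≤
      A * y * (1 - y) / (B * y * (1 - y) + C * (1 - y) + D * y + E) := by
  have hy0 : 0 ≤ y := hx.trans hxy
  have hy1 : y ≤ 1 := hyz.trans hz
  have hx1 : x ≤ 1 := hxy.trans hy1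
  have hz0 : 0 ≤ z := hy0.trans hyz
  have hdx : 0 < B * x * (1 - x) + C * (1 - x) + D * x + E := by
    have := mul_nonneg (mul_nonneg hB hx) (by linarith : (0:ℝ) ≤ 1 - x)
    have := mul_nonneg hC (by linarith : (0:ℝ) ≤ 1 - x)
    have := mul_nonneg hD hx
    linarith
  have hdy : 0 < B * y * (1 - y) + C * (1 - y) + D * y + E := by
    have := mul_nonneg (mul_nonneg hB hy0) (by linarith : (0:ℝ) ≤ 1 - y)
    have := mul_nonneg hC (by linarith : (0:ℝ) ≤ 1 - y)
    have := mul_nonneg hD hy0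
    linarith
  have hdz : 0 < B * z * (1 - z) + C * (1 - z) + D * z + E := by
    have := mul_nonneg (mul_nonneg hB hz0) (by linarith : (0:ℝ) ≤ 1 - z)
    have := mul_nonneg hC (by linarith : (0:ℝ) ≤ 1 - z)
    have := mul_nonneg hD hz0
    linarith
  set c : ℝ := A * x * (1 - x) / (B * x * (1 - x) + C * (1 - x) + D * x + E) with hc
  have hc0 : 0 ≤ c := by
    apply div_nonneg _ hdx.le
    exact mul_nonneg (mul_nonneg hA hx) (by linarith)
  have hcx : c * (B * x * (1 - x) + C * (1 - x) + D * x + E) = A * x * (1 - x) := by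
    rw [hc, div_mul_cancel₀ _ hdx.ne']
  have hcz : c * (B * z * (1 - z) + C * (1 - z) + D * z + E) ≤ A * z * (1 - z) :=
    (le_div_iff₀ hdz).mp h
  have hcB : c * B ≤ A := by
    rcases eq_or_lt_of_le (mul_nonneg hx (by linarith : (0:ℝ) ≤ 1 - x)) with h0 | h0
    · have hnum : A * x * (1 - x) = 0 := by rw [mul_assoc, ← h0, mul_zero]
      have : c = 0 := by rw [hc, hnum, zero_div]
      rw [this, zero_mul]; exact hA
    · have hrest : 0 ≤ c * (C * (1 - x) + D * x + E) := by
        apply mul_nonneg hc0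
        have := mul_nonneg hC (by linarith : (0:ℝ) ≤ 1 - x)
        have := mul_nonneg hD hx
        linarith
      nlinarith [hcx]
  rcases eq_or_lt_of_le (hxy.trans hyz) with hxz | hxz
  · have hxy' : x = y := le_antisymm hxy (hxz ▸ hyz)
    rw [← hxy']
  · rw [le_div_iff₀ hdy]
    have hkey : (A * y * (1 - y) - c * (B * y * (1 - y) + C * (1 - y) + D * y + E)) * (z - x) =
        (z - y) * (A * x * (1 - x) - c * (B * x * (1 - x) + C * (1 - x) + D * x + E)) +
        (y - x) * (A * z * (1 - z) - c * (B * z * (1 - z) + C * (1 - z) + D * z + E)) +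
        (A - c * B) * ((z - y) * (y - x) * (z - x)) := by ring
    nlinarith [mul_nonneg (mul_nonneg (sub_nonneg.2 hcB) (mul_nonneg (by linarith : (0:ℝ) ≤ z - y) (by linarith : (0:ℝ) ≤ y - x))) (by linarith : (0:ℝ) ≤ z - x),
      mul_nonneg (by linarith : (0:ℝ) ≤ y - x) (sub_nonneg.2 hcz)]




set_option maxHeartbeats 1000000 in
/-- Case 1 of Theorem 1 (training power limited by the peak power).
If α₁ = ρmax·K/(ρT) < α†, then the maximum of R over the feasible set F is attained
on the segment T_d = T - (ρT/ρmax)·α, α ∈ [α₁, 1]. -/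
theorem stmt_19 (ρ ρmax T : ℝ) (hρ : 0 < ρ) (hρmax : 0 < ρmax) (hT : 0 < T)
    (hρρ : ρ < ρmax) (K M : ℕ) (hK : 2 ≤ K) (hMK : K < M) (hKT : (K : ℝ) < T)
    (S : ℝ → ℝ → ℝ)
    (hS : ∀ α Td, S α Td =
      α * (1 - α) * ρ ^ 2 * T ^ 2 * ((M : ℝ) - 1) /
        (α * (1 - α) * ρ ^ 2 * T ^ 2 * ((K : ℝ) - 1) + (K : ℝ) * (1 - α) * ρ * T +
          α * ρ * T * Td + Td))
    (R : ℝ → ℝ → ℝ)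
    (hR : ∀ α Td, R α Td = ((K : ℝ) * Td / T) * Real.logb 2 (1 + S α Td))
    (F : Set (ℝ × ℝ))
    (hF : F = {p : ℝ × ℝ | 0 ≤ p.1 ∧ p.1 ≤ 1 ∧ 0 < p.2 ∧ p.2 ≤ T - (K : ℝ) ∧
      ρ * T * p.1 + ρmax * p.2 ≤ ρmax * T ∧ ρ * T ≤ ρ * T * p.1 + ρmax * p.2})
    (αd : ℝ) (hαd : αd ∈ Set.Ioo (0 : ℝ) 1)
    (hαdmax : ∀ α ∈ Set.Ioo (0 : ℝ) 1, S α (T - (K : ℝ)) ≤ S αd (T - (K : ℝ)))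
    (α₁ : ℝ) (hα₁ : α₁ = ρmax * (K : ℝ) / (ρ * T))
    (hcase : α₁ < αd) :
    ∃ α' ∈ Set.Icc α₁ 1,
      (α', T - (ρ * T / ρmax) * α') ∈ F ∧
      ∀ p ∈ F, R p.1 p.2 ≤ R α' (T - (ρ * T / ρmax) * α') := by
  obtain ⟨hαd0, hαd1⟩ := hαd
  have hρT : 0 < ρ * T := mul_pos hρ hT
  have hK2 : (2:ℝ) ≤ (K:ℝ) := by exact_mod_cast hK
  have hKM : (K:ℝ) < (M:ℝ) := by exact_mod_cast hMK
  have hM1 : (0:ℝ) ≤ (M:ℝ) - 1 := by linarith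
  have hK1 : (0:ℝ) ≤ (K:ℝ) - 1 := by linarith
  have hTK : (0:ℝ) < T - (K:ℝ) := by linarith
  have hα₁0 : 0 ≤ α₁ := by
    rw [hα₁]; positivity
  have hα₁1 : α₁ < 1 := hcase.trans hαd1
  -- the line evaluated at α₁ equals T - K
  have hlineα₁ : T - ρ * T / ρmax * α₁ = T - (K:ℝ) := by
    rw [hα₁]; field_simp
  -- the line value is positive for α ≤ 1
  have hline_pos : ∀ α : ℝ, α ≤ 1 → 0 < T - ρ * T / ρmax * α := by
    intro α hα
    have h1 : ρ * T / ρmax < T := by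
      rw [div_lt_iff₀ hρmax]; nlinarith
    have h2 : ρ * T / ρmax * α ≤ ρ * T / ρmax * 1 :=
      mul_le_mul_of_nonneg_left hα (div_pos hρT hρmax).le
    nlinarith
  -- positivity of the S-denominator
  have hden_pos : ∀ α Td : ℝ, 0 ≤ α → α ≤ 1 → 0 < Td →
      0 < α * (1 - α) * ρ ^ 2 * T ^ 2 * ((K : ℝ) - 1) + (K : ℝ) * (1 - α) * ρ * T +
        α * ρ * T * Td + Td := by
    intro α Td h0 h1 h2
    have e1 : 0 ≤ α * (1 - α) * ρ ^ 2 * T ^ 2 * ((K : ℝ) - 1) := by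
      have : 0 ≤ α * (1 - α) := mul_nonneg h0 (by linarith)
      have : 0 ≤ α * (1 - α) * ρ ^ 2 * T ^ 2 := by positivity
      exact mul_nonneg this hK1
    have e2 : 0 ≤ (K : ℝ) * (1 - α) * ρ * T := by
      have : (0:ℝ) ≤ (K:ℝ) * (1 - α) := mul_nonneg (by linarith) (by linarith)
      positivity
    have e3 : 0 ≤ α * ρ * T * Td := by positivity
    linarith
  -- nonnegativity of S
  have hSnn : ∀ α Td : ℝ, 0 ≤ α → α ≤ 1 → 0 < Td → 0 ≤ S α Td := by
    intro α Td h0 h1 hTd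
    rw [hS]
    apply div_nonneg
    · have : 0 ≤ α * (1 - α) := mul_nonneg h0 (by linarith)
      have h2 : 0 ≤ α * (1 - α) * ρ ^ 2 * T ^ 2 := by positivity
      exact mul_nonneg h2 hM1
    · exact (hden_pos α Td h0 h1 hTd).le
  -- feasibility of the whole segment
  have hfeas : ∀ α ∈ Set.Icc α₁ 1, (α, T - ρ * T / ρmax * α) ∈ F := by
    intro α ⟨h1, h2⟩
    rw [hF]
    have hρmaxline : ρmax * (T - ρ * T / ρmax * α) = ρmax * T - ρ * T * α := by
      field_simp
    refine ⟨hα₁0.trans h1, h2, hline_pos α h2, ?_, ?_, ?_⟩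
    · have := mul_le_mul_of_nonneg_left h1 (div_pos hρT hρmax).le
      linarith [hlineα₁]
    · linarith [hρmaxline]
    · have h6 : ρ * T ≤ ρmax * T := by nlinarith
      nlinarith [mul_nonneg (hα₁0.trans h1) hρT.le]
  -- segment objective
  set g : ℝ → ℝ := fun α => (K : ℝ) * (T - ρ * T / ρmax * α) / T *
      Real.logb 2 (1 + α * (1 - α) * ρ ^ 2 * T ^ 2 * ((M : ℝ) - 1) /
        (α * (1 - α) * ρ ^ 2 * T ^ 2 * ((K : ℝ) - 1) + (K : ℝ) * (1 - α) * ρ * T +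
          α * ρ * T * (T - ρ * T / ρmax * α) + (T - ρ * T / ρmax * α))) with hgdef
  have hgR : ∀ α : ℝ, R α (T - ρ * T / ρmax * α) = g α := by
    intro α
    rw [hgdef, hR, hS]
  have hcontg : ContinuousOn g (Set.Icc α₁ 1) := by
    rw [hgdef]
    have hdne : ∀ α ∈ Set.Icc α₁ 1,
        α * (1 - α) * ρ ^ 2 * T ^ 2 * ((K : ℝ) - 1) + (K : ℝ) * (1 - α) * ρ * T +
          α * ρ * T * (T - ρ * T / ρmax * α) + (T - ρ * T / ρmax * α) ≠ 0 := by
      intro α hα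
      exact (hden_pos α _ (hα₁0.trans hα.1) hα.2 (hline_pos α hα.2)).ne'
    have hnum : ContinuousOn (fun α : ℝ => α * (1 - α) * ρ ^ 2 * T ^ 2 * ((M : ℝ) - 1))
        (Set.Icc α₁ 1) := (by fun_prop : Continuous _).continuousOn
    have hden : ContinuousOn (fun α : ℝ =>
        α * (1 - α) * ρ ^ 2 * T ^ 2 * ((K : ℝ) - 1) + (K : ℝ) * (1 - α) * ρ * T +
          α * ρ * T * (T - ρ * T / ρmax * α) + (T - ρ * T / ρmax * α))
        (Set.Icc α₁ 1) := (by fun_prop : Continuous _).continuousOn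
    have hfrac := hnum.div hden hdne
    have hinner : ContinuousOn (fun α : ℝ => 1 + α * (1 - α) * ρ ^ 2 * T ^ 2 * ((M : ℝ) - 1) /
        (α * (1 - α) * ρ ^ 2 * T ^ 2 * ((K : ℝ) - 1) + (K : ℝ) * (1 - α) * ρ * T +
          α * ρ * T * (T - ρ * T / ρmax * α) + (T - ρ * T / ρmax * α))) (Set.Icc α₁ 1) :=
      continuousOn_const.add hfrac
    have hinnerne : ∀ α ∈ Set.Icc α₁ 1, 1 + α * (1 - α) * ρ ^ 2 * T ^ 2 * ((M : ℝ) - 1) /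
        (α * (1 - α) * ρ ^ 2 * T ^ 2 * ((K : ℝ) - 1) + (K : ℝ) * (1 - α) * ρ * T +
          α * ρ * T * (T - ρ * T / ρmax * α) + (T - ρ * T / ρmax * α)) ≠ 0 := by
      intro α hα
      have h0 : 0 ≤ α := hα₁0.trans hα.1
      have hnumnn : 0 ≤ α * (1 - α) * ρ ^ 2 * T ^ 2 * ((M : ℝ) - 1) := by
        have h11 : 0 ≤ α * (1 - α) := mul_nonneg h0 (by linarith [hα.2])
        have h12 : 0 ≤ α * (1 - α) * ρ ^ 2 * T ^ 2 := by positivity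
        exact mul_nonneg h12 hM1
      have := div_nonneg hnumnn (hden_pos α _ h0 hα.2 (hline_pos α hα.2)).le
      positivity
    have hlogcont : ContinuousOn (fun α : ℝ => Real.logb 2
        (1 + α * (1 - α) * ρ ^ 2 * T ^ 2 * ((M : ℝ) - 1) /
        (α * (1 - α) * ρ ^ 2 * T ^ 2 * ((K : ℝ) - 1) + (K : ℝ) * (1 - α) * ρ * T +
          α * ρ * T * (T - ρ * T / ρmax * α) + (T - ρ * T / ρmax * α)))) (Set.Icc α₁ 1) := by
      simp only [Real.logb]
      exact (hinner.log hinnerne).div_const _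
    exact ((by fun_prop : Continuous (fun α : ℝ => (K : ℝ) * (T - ρ * T / ρmax * α) / T)).continuousOn).mul hlogcont
  obtain ⟨α', hα'mem, hα'max⟩ :=
    isCompact_Icc.exists_isMaxOn (Set.nonempty_Icc.mpr hα₁1.le) hcontg
  -- monotonicity of R in the data duration
  have hmul_eq : ∀ t L : ℝ, (K : ℝ) * t / T * L = (K : ℝ) / T * (t * L) := by
    intro t L; ring
  have hmonoR : ∀ α : ℝ, 0 ≤ α → α ≤ 1 → ∀ t1 t2 : ℝ, 0 < t1 → t1 ≤ t2 →
      R α t1 ≤ R α t2 := by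
    intro α h0 h1 t1 t2 ht1 ht12
    have hSeq : ∀ t : ℝ, S α t =
        α * (1 - α) * ρ ^ 2 * T ^ 2 * ((M : ℝ) - 1) /
          ((α * (1 - α) * ρ ^ 2 * T ^ 2 * ((K : ℝ) - 1) + (K : ℝ) * (1 - α) * ρ * T) +
            (α * ρ * T + 1) * t) := by
      intro t; rw [hS]; congr 1; ring
    rw [hR, hR, hSeq, hSeq, hmul_eq, hmul_eq]
    have h1a : (0:ℝ) ≤ 1 - α := by linarith
    have hN : 0 ≤ α * (1 - α) * ρ ^ 2 * T ^ 2 * ((M : ℝ) - 1) := by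
      have h11 : 0 ≤ α * (1 - α) := mul_nonneg h0 h1a
      have h12 : 0 ≤ α * (1 - α) * ρ ^ 2 * T ^ 2 := by positivity
      exact mul_nonneg h12 hM1
    have hP : 0 ≤ α * (1 - α) * ρ ^ 2 * T ^ 2 * ((K : ℝ) - 1) + (K : ℝ) * (1 - α) * ρ * T := by
      have h11 : 0 ≤ α * (1 - α) := mul_nonneg h0 h1a
      have h12 : 0 ≤ α * (1 - α) * ρ ^ 2 * T ^ 2 := by positivity
      have h13 : 0 ≤ α * (1 - α) * ρ ^ 2 * T ^ 2 * ((K : ℝ) - 1) := mul_nonneg h12 hK1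
      have h14 : (0:ℝ) ≤ (K : ℝ) * (1 - α) := mul_nonneg (by linarith) h1a
      have h15 : 0 ≤ (K : ℝ) * (1 - α) * ρ * T := mul_nonneg (mul_nonneg h14 hρ.le) hT.le
      linarith
    have hQ : 0 < α * ρ * T + 1 := by
      have h16 : 0 ≤ α * ρ * T := mul_nonneg (mul_nonneg h0 hρ.le) hT.le
      linarith
    exact mul_le_mul_of_nonneg_left (aux_mono _ _ _ t1 t2 hN hP hQ ht1 ht12)
      (by positivity)
  refine ⟨α', hα'mem, hfeas α' hα'mem, ?_⟩
  intro p hp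
  rw [hF] at hp
  obtain ⟨hp0, hp1, hpTd, hpTK, hpup, hplow⟩ := hp
  rcases le_or_gt α₁ p.1 with hcc | hcc
  · -- above α₁ : peak training power constraint binds
    have hple : p.2 ≤ T - ρ * T / ρmax * p.1 := by
      have hρmaxline : ρmax * (T - ρ * T / ρmax * p.1) = ρmax * T - ρ * T * p.1 := by
        field_simp
      exact (mul_le_mul_iff_right₀ hρmax).mp (by linarith)
    calc R p.1 p.2 ≤ R p.1 (T - ρ * T / ρmax * p.1) :=
          hmonoR p.1 hp0 hp1 _ _ hpTd hple
      _ = g p.1 := hgR p.1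
      _ ≤ g α' := isMaxOn_iff.mp hα'max p.1 ⟨hcc, hp1⟩
      _ = R α' (T - ρ * T / ρmax * α') := (hgR α').symm
  · -- below α₁
    have hx1 : p.1 < 1 := hcc.trans hα₁1
    have hstep1 : R p.1 p.2 ≤ R p.1 (T - (K : ℝ)) :=
      hmonoR p.1 hp0 hp1 _ _ hpTd hpTK
    have hSineq : S p.1 (T - (K : ℝ)) ≤ S α₁ (T - (K : ℝ)) := by
      rcases eq_or_lt_of_le hp0 with h0 | h0
      · rw [hS, ← h0]
        simp only [zero_mul, zero_div]
        exact hSnn α₁ _ hα₁0 hα₁1.le hTK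
      · have hform : ∀ α : ℝ, S α (T - (K : ℝ)) =
            ρ ^ 2 * T ^ 2 * ((M : ℝ) - 1) * α * (1 - α) /
              (ρ ^ 2 * T ^ 2 * ((K : ℝ) - 1) * α * (1 - α) + (K : ℝ) * ρ * T * (1 - α) +
                ρ * T * (T - (K : ℝ)) * α + (T - (K : ℝ))) := by
          intro α; rw [hS]; congr 1 <;> ring
        have hmaxd := hαdmax p.1 ⟨h0, by linarith⟩
        rw [hform p.1, hform αd] at hmaxd
        rw [hform p.1, hform α₁]
        exact aux_qc _ _ _ _ _ (mul_nonneg (by positivity) hM1)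
          (mul_nonneg (by positivity) hK1) (by positivity)
          (mul_nonneg hρT.le hTK.le) hTK p.1 α₁ αd hp0 hcc.le hcase.le hαd1.le hmaxd
    have hstep2 : R p.1 (T - (K : ℝ)) ≤ R α₁ (T - (K : ℝ)) := by
      rw [hR, hR]
      refine mul_le_mul_of_nonneg_left ?_ (by positivity)
      apply Real.logb_le_logb_of_le one_lt_two
      · linarith [hSnn p.1 (T - (K : ℝ)) hp0 hx1.le hTK]
      · linarith
    calc R p.1 p.2 ≤ R p.1 (T - (K : ℝ)) := hstep1
      _ ≤ R α₁ (T - (K : ℝ)) := hstep2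
      _ = g α₁ := by rw [← hlineα₁]; exact hgR α₁
      _ ≤ g α' := isMaxOn_iff.mp hα'max α₁ (Set.left_mem_Icc.mpr hα₁1.le)
      _ = R α' (T - ρ * T / ρmax * α') := (hgR α').symm
end
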